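/- arXiv:2105.04878 — 3 statements merged into one kernel-verified Lean document; each statement's English description precedes it below -/
import Mathlib

section
/- Let X be a quasi-median graph of finite cubical dimension. Suppose for every hyperplane J a sector J^+ delimited by J is chosen so that: (a) for any two hyperplanes J1, J2, the intersection J1^+ ∩ J2^+ is nonempty; (b) every non-increasing sequence J1^+ ⊇ J2^+ ⊇ ⋯ of chosen sectors is eventually constant. Then the intersection of all chosen sectors ⋂_J J^+ is nonempty and consists of exactly one vertex. -/
open SimpleGraph

/-- The triangle condition of quasi-median graphs. -/
def QMTriangle {V : Type*} (G : SimpleGraph V) : Prop :=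
  ∀ a x y : V, G.Adj x y → G.dist a x = G.dist a y →
    ∃ z : V, G.Adj x z ∧ G.Adj y z ∧ G.dist a z + 1 = G.dist a x

/-- The quadrangle condition of quasi-median graphs. -/
def QMQuad {V : Type*} (G : SimpleGraph V) : Prop :=
  ∀ a x y z : V, G.Adj x z → G.Adj y z → x ≠ y → G.dist a x = G.dist a y →
    G.dist a z = G.dist a x + 1 →
    ∃ w : V, G.Adj x w ∧ G.Adj y w ∧ G.dist a w + 2 = G.dist a z

/-- `G` has no induced `K₄⁻` (complete graph on four vertices minus an edge). -/
def NoK4minus {V : Type*} (G : SimpleGraph V) : Prop :=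
  ¬ ∃ a b c d : V, a ≠ b ∧ a ≠ c ∧ a ≠ d ∧ b ≠ c ∧ b ≠ d ∧ c ≠ d ∧
    G.Adj a b ∧ G.Adj a c ∧ G.Adj a d ∧ G.Adj b c ∧ G.Adj b d ∧ ¬ G.Adj c d

/-- `G` has no induced complete bipartite graph `K_{3,2}`. -/
def NoK32 {V : Type*} (G : SimpleGraph V) : Prop :=
  ¬ ∃ x1 x2 x3 y1 y2 : V, x1 ≠ x2 ∧ x1 ≠ x3 ∧ x2 ≠ x3 ∧ y1 ≠ y2 ∧
    G.Adj x1 y1 ∧ G.Adj x1 y2 ∧ G.Adj x2 y1 ∧ G.Adj x2 y2 ∧ G.Adj x3 y1 ∧ G.Adj x3 y2 ∧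
    ¬ G.Adj x1 x2 ∧ ¬ G.Adj x1 x3 ∧ ¬ G.Adj x2 x3 ∧ ¬ G.Adj y1 y2

/-- A quasi-median graph: connected, with no induced `K₄⁻` nor `K_{3,2}`, satisfying
the triangle and quadrangle conditions. -/
def QuasiMedian {V : Type*} (G : SimpleGraph V) : Prop :=
  G.Connected ∧ NoK4minus G ∧ NoK32 G ∧ QMTriangle G ∧ QMQuad G

/-- One step of the relation generating hyperplanes: two edges of a common
triangle, or two opposite edges of a square. -/
def hypStep {V : Type*} (G : SimpleGraph V) (e e' : Sym2 V) : Prop :=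
  (∃ a b c : V, G.Adj a b ∧ G.Adj b c ∧ G.Adj a c ∧
      e ∈ ({s(a, b), s(b, c), s(a, c)} : Set (Sym2 V)) ∧
      e' ∈ ({s(a, b), s(b, c), s(a, c)} : Set (Sym2 V))) ∨
  (∃ a b c d : V, G.Adj a b ∧ G.Adj b c ∧ G.Adj c d ∧ G.Adj d a ∧ a ≠ c ∧ b ≠ d ∧
      e = s(a, b) ∧ e' = s(d, c))

/-- The hyperplane (equivalence class of edges) of an edge `e`. -/
def hypClass {V : Type*} (G : SimpleGraph V) (e : Sym2 V) : Set (Sym2 V) :=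
  {e' | Relation.ReflTransGen (hypStep G) e e'}

/-- `J` is a hyperplane of `G`. -/
def IsHyperplane {V : Type*} (G : SimpleGraph V) (J : Set (Sym2 V)) : Prop :=
  ∃ e ∈ G.edgeSet, J = hypClass G e

/-- The vertices of the carrier of a hyperplane: endpoints of its edges. -/
def hypVerts {V : Type*} (J : Set (Sym2 V)) : Set V := {v | ∃ e ∈ J, v ∈ e}

/-- Two distinct hyperplanes are transverse if the second contains an edge both of
whose endpoints lie in the carrier of the first. -/
def Transverse {V : Type*} (G : SimpleGraph V) (J1 J2 : Set (Sym2 V)) : Prop :=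
  J1 ≠ J2 ∧ ∃ u v : V, G.Adj u v ∧ s(u, v) ∈ J2 ∧ u ∈ hypVerts J1 ∧ v ∈ hypVerts J1

/-- `S` is a sector delimited by the hyperplane `J`: a connected component of the graph
obtained by removing the (open) edges of `J`. -/
def IsSectorOf {V : Type*} (G : SimpleGraph V) (J : Set (Sym2 V)) (S : Set V) : Prop :=
  ∃ v : V, S = {w | (G.deleteEdges J).Reachable v w}

section QMwork

open Relation

variable {V : Type*} {G : SimpleGraph V}

/-! ### Distance preliminaries -/

lemma adj_dist_one' {u v : V} (h : G.Adj u v) : G.dist u v = 1 :=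
  SimpleGraph.dist_eq_one_iff_adj.mpr h

lemma dist_le_adj' (hc : G.Connected) (a : V) {u v : V} (h : G.Adj u v) :
    G.dist a v ≤ G.dist a u + 1 := by
  have h2 := hc.dist_triangle (u := a) (v := u) (w := v)
  rwa [adj_dist_one' h] at h2

lemma dist_zero_eq (hc : G.Connected) {u v : V} (h : G.dist u v = 0) : u = v :=
  (hc.dist_eq_zero_iff).mp h

lemma exists_adj_dist (hc : G.Connected) {a b : V} {n : ℕ} (h : G.dist a b = n + 1) :
    ∃ c, G.Adj b c ∧ G.dist a c = n := by
  obtain ⟨W, hW⟩ := hc.exists_walk_length_eq_dist b a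
  cases W with
  | nil =>
    rw [SimpleGraph.dist_comm] at h
    simp [h] at hW
    simp at h
  | @cons _ c _ hadj W' =>
    refine ⟨c, hadj, le_antisymm ?_ ?_⟩
    · have h1 : G.dist c a ≤ n := by
        have h2 := SimpleGraph.dist_le W'
        have h3 : W'.length = n := by
          rw [SimpleGraph.dist_comm] at h
          simp [h] at hW
          omega
        omega
      rwa [SimpleGraph.dist_comm] at h1
    · have h4 : G.dist a b ≤ G.dist a c + 1 := dist_le_adj' hc a hadj.symm
      omega

/-! ### hypStep and hypClass basics -/

lemma hypStep_symm : Symmetric (hypStep G) := by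
  rintro e e' (⟨a, b, c, hab, hbc, hac, he, he'⟩ |
    ⟨a, b, c, d, hab, hbc, hcd, hda, hac, hbd, he, he'⟩)
  · exact Or.inl ⟨a, b, c, hab, hbc, hac, he', he⟩
  · refine Or.inr ⟨d, c, b, a, hcd.symm, hbc.symm, hab.symm, hda.symm, hbd.symm, hac.symm, he', ?_⟩
    rw [he, Sym2.eq_swap]

lemma mem_hypClass_self (G : SimpleGraph V) (e : Sym2 V) : e ∈ hypClass G e :=
  Relation.ReflTransGen.refl

lemma hypClass_eq_of_mem {e e' : Sym2 V} (h : e' ∈ hypClass G e) :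
    hypClass G e' = hypClass G e := by
  have hsym := @Relation.ReflTransGen.stdSymm _ (hypStep G) ⟨fun _ _ hs => hypStep_symm hs⟩
  ext f
  constructor
  · intro hf
    exact Relation.ReflTransGen.trans h hf
  · intro hf
    exact Relation.ReflTransGen.trans (hsym.symm _ _ h) hf

lemma hyp_disjoint {J J' : Set (Sym2 V)} (hJ : IsHyperplane G J) (hJ' : IsHyperplane G J')
    (hne : J ≠ J') {e : Sym2 V} (he : e ∈ J) (he' : e ∈ J') : False := by
  obtain ⟨e₁, he₁, rfl⟩ := hJ
  obtain ⟨e₂, he₂, rfl⟩ := hJ'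
  exact hne ((hypClass_eq_of_mem he).symm.trans (hypClass_eq_of_mem he'))

/-! ### Maximal cliques and gates -/

lemma clique_exists (hadj : G.Adj x y) :
    ∃ K : Set V, G.IsClique K ∧ x ∈ K ∧ y ∈ K ∧
      ∀ K', G.IsClique K' → K ⊆ K' → K' = K := by
  obtain ⟨M, hsub, hmax⟩ := zorn_subset_nonempty {K : Set V | G.IsClique K}
    (fun c hc hchain hne => by
      refine ⟨⋃₀ c, ?_, fun s hs => Set.subset_sUnion_of_mem hs⟩
      rintro a ⟨s, hs, has⟩ b ⟨t, ht, hbt⟩ hab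
      rcases hchain.total hs ht with h | h
      · exact hc ht (h has) hbt hab
      · exact hc hs has (h hbt) hab)
    {x, y} (by
      rintro a ha b hb hab
      rcases ha with rfl | ha <;> rcases hb with rfl | hb
      · exact absurd rfl hab
      · rcases hb with rfl; exact hadj
      · rcases ha with rfl; exact hadj.symm
      · rcases ha with rfl; rcases hb with rfl; exact absurd rfl hab)
  exact ⟨M, hmax.prop, hsub (by simp), hsub (by simp),
    fun K' hK' hMK' => (hmax.eq_of_le hK' hMK').symm⟩

lemma gate_exists (hQM : QuasiMedian G) {K : Set V}
    (hK : G.IsClique K) (hmax : ∀ K', G.IsClique K' → K ⊆ K' → K' = K)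
    (hne : K.Nonempty) (x : V) :
    ∃ g ∈ K, ∀ k ∈ K, G.dist x k = G.dist x g + G.dist g k := by
  obtain ⟨hc, hK4, hK32, htri, hquad⟩ := hQM
  have hSne : {n | ∃ k ∈ K, G.dist x k = n}.Nonempty :=
    ⟨_, hne.choose, hne.choose_spec, rfl⟩
  set m := sInf {n | ∃ k ∈ K, G.dist x k = n} with hm
  obtain ⟨g, hg, hgm⟩ : ∃ k ∈ K, G.dist x k = m := Nat.sInf_mem hSne
  have huniq : ∀ k ∈ K, G.dist x k = m → k = g := by
    intro k hk hkm
    by_contra hkg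
    have hadj : G.Adj k g := hK hk hg hkg
    obtain ⟨z, hkz, hgz, hz⟩ := htri x k g hadj (by rw [hkm, hgm])
    have hzK : z ∉ K := by
      intro hzK
      have : m ≤ G.dist x z := Nat.sInf_le ⟨z, hzK, rfl⟩
      omega
    have hzadj : ∀ w ∈ K, w ≠ z → G.Adj z w := by
      intro w hw hwz
      by_cases hwk : w = k
      · subst hwk; exact hkz.symm
      by_cases hwg : w = g
      · subst hwg; exact hgz.symm
      by_contra hnadj
      exact hK4 ⟨k, g, z, w, hkg, hkz.ne, fun h => hwk h.symm, hgz.ne,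
        fun h => hwg h.symm, Ne.symm hwz, hadj, hkz, hK hk hw (fun h => hwk h.symm),
        hgz, hK hg hw (fun h => hwg h.symm), hnadj⟩
    have hclique : G.IsClique (insert z K) := by
      rintro a ha b hb hab
      rcases ha with rfl | ha
      · rcases hb with rfl | hb
        · exact absurd rfl hab
        · exact hzadj b hb (Ne.symm hab)
      · rcases hb with rfl | hb
        · exact (hzadj a ha hab).symm
        · exact hK ha hb hab
    have heq := hmax _ hclique (Set.subset_insert _ _)
    exact hzK (heq ▸ Set.mem_insert z K)
  refine ⟨g, hg, fun k hk => ?_⟩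
  by_cases hkg : k = g
  · subst hkg; simp
  · have h1 : G.dist g k = 1 := adj_dist_one' (hK hg hk (Ne.symm hkg))
    have h2 : m ≤ G.dist x k := Nat.sInf_le ⟨k, hk, rfl⟩
    have h3 : G.dist x k ≤ G.dist x g + 1 := dist_le_adj' hc x (hK hg hk (Ne.symm hkg))
    have h4 : G.dist x k ≠ m := fun h => hkg (huniq k hk h)
    omega


/-! ### Gate systems -/

structure GateSys (G : SimpleGraph V) : Type _ where
  K : Set V
  clique : G.IsClique K
  max : ∀ K', G.IsClique K' → K ⊆ K' → K' = K
  gw : V → V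
  mem : ∀ x, gw x ∈ K
  gate : ∀ x, ∀ k ∈ K, G.dist x k = G.dist x (gw x) + G.dist (gw x) k

lemma gatesys_exists (hQM : QuasiMedian G) {x y : V} (hadj : G.Adj x y) :
    ∃ S : GateSys G, x ∈ S.K ∧ y ∈ S.K := by
  obtain ⟨K, hK, hx, hy, hmax⟩ := clique_exists hadj
  have hg : ∀ z : V, ∃ g ∈ K, ∀ k ∈ K, G.dist z k = G.dist z g + G.dist g k :=
    fun z => gate_exists hQM hK hmax ⟨x, hx⟩ z
  choose gw hmem hgate using hg
  exact ⟨⟨K, hK, hmax, gw, hmem, hgate⟩, hx, hy⟩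

namespace GateSys

variable (S : GateSys G)

lemma unique (hc : G.Connected) {x g : V} (hg : g ∈ S.K)
    (hle : G.dist x g ≤ G.dist x (S.gw x)) : g = S.gw x := by
  have h := S.gate x g hg
  have h0 : G.dist (S.gw x) g = 0 := by omega
  exact (dist_zero_eq hc h0).symm

lemma self_mem (hc : G.Connected) {x : V} (hx : x ∈ S.K) : S.gw x = x := by
  have h := S.gate x x hx
  rw [SimpleGraph.dist_self] at h
  exact dist_zero_eq hc (by omega)

/-- levels of adjacent vertices with distinct gates agree -/
lemma lvl_eq (hc : G.Connected) {x y : V} (hxy : G.Adj x y) (hne : S.gw x ≠ S.gw y) :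
    G.dist y (S.gw y) = G.dist x (S.gw x) := by
  have hd : ∀ u v : V, G.Adj u v → S.gw u ≠ S.gw v →
      G.dist v (S.gw v) ≤ G.dist u (S.gw u) := by
    intro u v huv hne
    have h1 : G.dist v (S.gw u) = G.dist v (S.gw v) + 1 := by
      have := S.gate v (S.gw u) (S.mem u)
      rwa [adj_dist_one' (S.clique (S.mem v) (S.mem u) (fun h => hne (h.symm ▸ rfl)))] at this
    have h2 : G.dist v (S.gw u) ≤ 1 + G.dist u (S.gw u) := by
      have := hc.dist_triangle (u := v) (v := u) (w := S.gw u)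
      rwa [adj_dist_one' huv.symm] at this
    omega
  exact le_antisymm (hd x y hxy hne) (hd y x hxy.symm (Ne.symm hne))

lemma dist_gw_other (hc : G.Connected) {x y : V} (hxy : G.Adj x y) (hne : S.gw x ≠ S.gw y) :
    G.dist x (S.gw y) = G.dist x (S.gw x) + 1 := by
  have := S.gate x (S.gw y) (S.mem y)
  rwa [adj_dist_one' (S.clique (S.mem x) (S.mem y) hne)] at this

end GateSys

/-! ### edges of the clique are all in the hyperplane class -/

lemma clique_rel {K : Set V} (hK : G.IsClique K) {p q p' q' : V} (hp : p ∈ K) (hq : q ∈ K)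
    (hp' : p' ∈ K) (hq' : q' ∈ K) (hpq : p ≠ q) (hpq' : p' ≠ q') :
    Relation.ReflTransGen (hypStep G) s(p, q) s(p', q') := by
  have single : ∀ a b c : V, a ∈ K → b ∈ K → c ∈ K → a ≠ b → a ≠ c → b ≠ c →
      Relation.ReflTransGen (hypStep G) s(a, b) s(a, c) := by
    intro a b c ha hb hc hab hac hbc
    exact Relation.ReflTransGen.single
      (Or.inl ⟨a, b, c, hK ha hb hab, hK hb hc hbc, hK ha hc hac, by simp, by simp⟩)
  by_cases hq'q : q' = q
  · rw [hq'q]; rw [hq'q] at hpq'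
    by_cases hp'p : p' = p
    · rw [hp'p]
    · rw [Sym2.eq_swap (a := p) (b := q), Sym2.eq_swap (a := p') (b := q)]
      exact single q p p' hq hp hp' (Ne.symm hpq) (Ne.symm hpq') (fun h => hp'p h.symm)
  by_cases hq'p : q' = p
  · rw [hq'p]; rw [hq'p] at hpq'
    by_cases hp'q : p' = q
    · rw [hp'q, Sym2.eq_swap (a := q) (b := p)]
    · rw [Sym2.eq_swap (a := p') (b := p)]
      exact single p q p' hp hq hp' hpq (Ne.symm hpq') (fun h => hp'q h.symm)
  by_cases hp'p : p' = p
  · rw [hp'p]; rw [hp'p] at hpq'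
    exact single p q q' hp hq hq' hpq hpq' (fun h => hq'q h.symm)
  by_cases hp'q : p' = q
  · rw [hp'q]; rw [hp'q] at hpq'
    rw [Sym2.eq_swap (a := p) (b := q)]
    exact single q p q' hq hp hq' (Ne.symm hpq) hpq' (fun h => hq'p h.symm)
  · have s1 := single p q q' hp hq hq' hpq (fun h => hq'p h.symm) (fun h => hq'q h.symm)
    have s2 := single q' p p' hq' hp hp' hq'p (Ne.symm hpq') (Ne.symm hp'p)
    rw [Sym2.eq_swap (a := q') (b := p)] at s2
    rw [Sym2.eq_swap (a := p') (b := q')]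
    exact s1.trans s2

/-! ### The crossing lemma -/

lemma crossing (hQM : QuasiMedian G) (S : GateSys G)
    {p₀ q₀ : V} (hp₀ : p₀ ∈ S.K) (hq₀ : q₀ ∈ S.K) (hpq₀ : p₀ ≠ q₀) :
    ∀ m : ℕ, ∀ x y : V, G.Adj x y → S.gw x ≠ S.gw y → G.dist x (S.gw x) = m →
      Relation.ReflTransGen (hypStep G) s(p₀, q₀) s(x, y) := by
  obtain ⟨hc, hK4, hK32, htri, hquad⟩ := hQM
  intro m
  induction m using Nat.strong_induction_on with
  | _ m IH =>
  intro x y hxy hne hm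
  rcases Nat.eq_zero_or_pos m with rfl | hpos
  · have hgx : S.gw x = x := (dist_zero_eq hc hm).symm
    have hyl : G.dist y (S.gw y) = 0 := by rw [S.lvl_eq hc hxy hne, hm]
    have hgy : S.gw y = y := (dist_zero_eq hc hyl).symm
    have hx : x ∈ S.K := hgx ▸ S.mem x
    have hy : y ∈ S.K := hgy ▸ S.mem y
    exact clique_rel S.clique hp₀ hq₀ hx hy hpq₀ hxy.ne
  obtain ⟨m', rfl⟩ : ∃ m', m = m' + 1 := ⟨m - 1, by omega⟩
  have hlvly : G.dist y (S.gw y) = m' + 1 := by rw [S.lvl_eq hc hxy hne, hm]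
  obtain ⟨u, hyu, hu⟩ := exists_adj_dist hc
    (show G.dist (S.gw y) y = m' + 1 by rw [SimpleGraph.dist_comm]; exact hlvly)
  have hu' : G.dist u (S.gw y) = m' := by rw [SimpleGraph.dist_comm]; exact hu
  have hlvlu_ge : m' ≤ G.dist u (S.gw u) := by
    have h1 : G.dist y (S.gw u) ≤ 1 + G.dist u (S.gw u) := by
      have h3 := hc.dist_triangle (u := y) (v := u) (w := S.gw u)
      rwa [adj_dist_one' hyu] at h3
    have h2 := S.gate y (S.gw u) (S.mem u)
    omega
  have hgu : S.gw y = S.gw u := S.unique hc (S.mem y) (le_trans (le_of_eq hu') hlvlu_ge)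
  have hlvlu : G.dist u (S.gw u) = m' := by rw [← hgu]; exact hu'
  have hxu : x ≠ u := fun h => hne (by rw [h, ← hgu])
  have hdgx : G.dist (S.gw x) x = m' + 1 := by rw [SimpleGraph.dist_comm]; exact hm
  have hdgu : G.dist (S.gw x) u = m' + 1 := by
    rw [SimpleGraph.dist_comm]
    have h2 := S.gate u (S.gw x) (S.mem x)
    have h3 : G.dist (S.gw u) (S.gw x) = 1 :=
      adj_dist_one' (S.clique (S.mem u) (S.mem x) (fun h => hne (by rw [← h, ← hgu])))
    omega
  have hdgy : G.dist (S.gw x) y = (m' + 1) + 1 := by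
    rw [SimpleGraph.dist_comm]
    have h2 := S.gate y (S.gw x) (S.mem x)
    have h3 : G.dist (S.gw y) (S.gw x) = 1 :=
      adj_dist_one' (S.clique (S.mem y) (S.mem x) (Ne.symm hne))
    omega
  obtain ⟨w, hxw, huw, hw⟩ := hquad (S.gw x) x u y hxy hyu.symm hxu
    (by rw [hdgx, hdgu]) (by rw [hdgy, hdgx])
  have hdw : G.dist (S.gw x) w = m' := by rw [hdgy] at hw; omega
  have hlvlw_ge : m' ≤ G.dist w (S.gw w) := by
    have h1 : G.dist x (S.gw w) ≤ 1 + G.dist w (S.gw w) := by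
      have h3 := hc.dist_triangle (u := x) (v := w) (w := S.gw w)
      rwa [adj_dist_one' hxw] at h3
    have h2 := S.gate x (S.gw w) (S.mem w)
    omega
  have hgww : S.gw x = S.gw w := S.unique hc (S.mem x)
    (le_trans (le_of_eq (by rw [SimpleGraph.dist_comm]; exact hdw)) hlvlw_ge)
  have hlvlw : G.dist w (S.gw w) = m' := by
    rw [← hgww, SimpleGraph.dist_comm]; exact hdw
  have hneuw : S.gw w ≠ S.gw u := by
    rw [← hgww, ← hgu]; exact hne
  have IHrel := IH m' (by omega) w u huw.symm hneuw hlvlw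
  have hsq : hypStep G s(w, u) s(x, y) := Or.inr ⟨w, u, y, x, huw.symm, hyu.symm, hxy.symm, hxw,
    (by rw [hdgy]; omega : G.dist (S.gw x) w ≠ G.dist (S.gw x) y) ∘ (congrArg _),
    Ne.symm hxu, rfl, rfl⟩
  exact IHrel.tail hsq

/-! ### Invariance of gates along walks avoiding the class -/

lemma gw_const_of_reachable (hQM : QuasiMedian G) (S : GateSys G)
    {p₀ q₀ : V} (hp₀ : p₀ ∈ S.K) (hq₀ : q₀ ∈ S.K) (hpq₀ : p₀ ≠ q₀)
    {x y : V} (h : (G.deleteEdges (hypClass G s(p₀, q₀))).Reachable x y) :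
    S.gw x = S.gw y := by
  obtain ⟨W⟩ := h
  induction W with
  | nil => rfl
  | @cons a b c hadj W' IH =>
    rw [SimpleGraph.deleteEdges_adj] at hadj
    have hab : S.gw a = S.gw b := by
      by_contra hne
      exact hadj.2 (crossing ⟨hQM.1, hQM.2.1, hQM.2.2.1, hQM.2.2.2.1, hQM.2.2.2.2⟩ S hp₀ hq₀ hpq₀
        (G.dist a (S.gw a)) a b hadj.1 hne rfl)
    rw [hab]; exact IH

lemma edge_separates (hQM : QuasiMedian G) {x y : V} (hxy : G.Adj x y) :
    ¬ (G.deleteEdges (hypClass G s(x, y))).Reachable x y := by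
  obtain ⟨S, hx, hy⟩ := gatesys_exists hQM hxy
  intro h
  have h2 := gw_const_of_reachable hQM S hx hy hxy.ne h
  rw [S.self_mem hQM.1 hx, S.self_mem hQM.1 hy] at h2
  exact hxy.ne h2

lemma edge_separates' (hQM : QuasiMedian G) {J : Set (Sym2 V)} (hJ : IsHyperplane G J)
    {x y : V} (hxy : G.Adj x y) (he : s(x, y) ∈ J) :
    ¬ (G.deleteEdges J).Reachable x y := by
  obtain ⟨e₁, he₁, rfl⟩ := hJ
  rw [← hypClass_eq_of_mem he]
  exact edge_separates hQM hxy

lemma edge_not_mem_of_reachable (hQM : QuasiMedian G) {J : Set (Sym2 V)}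
    (hJ : IsHyperplane G J) {x y : V} (hxy : G.Adj x y)
    (h : (G.deleteEdges J).Reachable x y) : s(x, y) ∉ J :=
  fun he => edge_separates' hQM hJ hxy he h

/-- the unique-neighbour lemma: a vertex outside a sector has at most one neighbour
inside the sector -/
lemma unl (hQM : QuasiMedian G) {J : Set (Sym2 V)} (hJ : IsHyperplane G J) {w y z : V}
    (hwy : G.Adj w y) (hwz : G.Adj w z) (hw : ¬ (G.deleteEdges J).Reachable y w)
    (hyz : (G.deleteEdges J).Reachable y z) : z = y := by
  have hewy : s(w, y) ∈ J := by
    by_contra h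
    refine hw (Reachable.symm ?_)
    exact SimpleGraph.Adj.reachable (SimpleGraph.deleteEdges_adj.mpr ⟨hwy, h⟩)
  obtain ⟨e₁, he₁, rfl⟩ := hJ
  have hJeq : hypClass G s(w, y) = hypClass G e₁ := hypClass_eq_of_mem hewy
  obtain ⟨S, hwK, hyK⟩ := gatesys_exists hQM hwy
  have hgz : S.gw z = S.gw y := by
    refine gw_const_of_reachable hQM S hwK hyK hwy.ne ?_
    rw [hJeq]
    exact hyz.symm
  have hzw : G.dist z w = G.dist z y + G.dist y w := by
    have h2 := S.gate z w hwK
    rwa [hgz, S.self_mem hQM.1 hyK] at h2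
  have h3 : G.dist z w = 1 := adj_dist_one' hwz.symm
  have h4 : G.dist y w = 1 := adj_dist_one' hwy.symm
  exact dist_zero_eq hQM.1 (by omega)

/-! ### Geodesics inside sectors: the surgery argument -/

noncomputable def wmes (G : SimpleGraph V) (J : Set (Sym2 V)) (y : V) {a b : V}
    (W : (G.deleteEdges J).Walk a b) : ℕ :=
  (W.support.map fun v => 4 ^ (G.dist y v + 2)).sum

lemma wmes_cons (G : SimpleGraph V) (J : Set (Sym2 V)) (y : V) {a b c : V}
    (h : (G.deleteEdges J).Adj a b) (W : (G.deleteEdges J).Walk b c) :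
    wmes G J y (SimpleGraph.Walk.cons h W) = 4 ^ (G.dist y a + 2) + wmes G J y W := by
  simp [wmes]

lemma wmes_pos (G : SimpleGraph V) (J : Set (Sym2 V)) (y : V) {a b : V}
    (W : (G.deleteEdges J).Walk a b) : 1 ≤ wmes G J y W := by
  cases W with
  | nil =>
    simp only [wmes, SimpleGraph.Walk.support_nil, List.map_cons, List.map_nil, List.sum_cons,
      List.sum_nil, add_zero]
    exact Nat.one_le_pow _ _ (by norm_num)
  | cons h W =>
    rw [wmes_cons]
    have h1 : 1 ≤ (4:ℕ) ^ (G.dist y a + 2) := Nat.one_le_pow _ _ (by norm_num)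
    omega

lemma deladj (hQM : QuasiMedian G) {J : Set (Sym2 V)} (hJ : IsHyperplane G J)
    {u v : V} (huv : G.Adj u v) (hre : (G.deleteEdges J).Reachable u v) :
    (G.deleteEdges J).Adj u v :=
  SimpleGraph.deleteEdges_adj.mpr ⟨huv, edge_not_mem_of_reachable hQM hJ huv hre⟩

lemma up_lemma (hQM : QuasiMedian G) {J : Set (Sym2 V)} (hJ : IsHyperplane G J) (y : V) :
    ∀ N : ℕ, ∀ a b : V, ∀ (hab : (G.deleteEdges J).Adj a b)
      (W : (G.deleteEdges J).Walk b y),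
      wmes G J y (SimpleGraph.Walk.cons hab W) ≤ N →
      G.dist y b = G.dist y a + 1 →
      ∃ W' : (G.deleteEdges J).Walk a y,
        wmes G J y W' + 11 * 4 ^ (G.dist y b) ≤ wmes G J y (SimpleGraph.Walk.cons hab W) := by
  obtain ⟨hc, hK4, hK32, htri, hquad⟩ := hQM
  have hQM' : QuasiMedian G := ⟨hc, hK4, hK32, htri, hquad⟩
  intro N
  induction N using Nat.strong_induction_on with
  | _ N IH =>
  intro a b hab W hN hup
  cases W with
  | nil =>
    rw [SimpleGraph.dist_self] at hup
    omega
  | @cons _ c _ hbc W₂ =>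
    have hab' : G.Adj a b := (SimpleGraph.deleteEdges_adj.mp hab).1
    have hbc' : G.Adj b c := (SimpleGraph.deleteEdges_adj.mp hbc).1
    have hd1 : G.dist y c ≤ G.dist y b + 1 := dist_le_adj' hc y hbc'
    have hd2 : G.dist y b ≤ G.dist y c + 1 := dist_le_adj' hc y hbc'.symm
    have hrb : (G.deleteEdges J).Reachable b y :=
      SimpleGraph.Walk.reachable (SimpleGraph.Walk.cons hbc W₂)
    have hrab : (G.deleteEdges J).Reachable a b := hab.reachable
    have hrbc : (G.deleteEdges J).Reachable b c := hbc.reachable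
    have e2 : ∀ k : ℕ, (4:ℕ) ^ (k + 2) = 16 * 4 ^ k := by
      intro k; rw [pow_add]; ring
    rcases Nat.lt_trichotomy (G.dist y c) (G.dist y b) with hcase | hcase | hcase
    · -- peak at b
      have hdc : G.dist y c + 1 = G.dist y b := by omega
      by_cases hac : a = c
      · subst hac
        refine ⟨W₂, ?_⟩
        simp only [wmes_cons, e2]
        have e3 : (4:ℕ) ^ (G.dist y b) = 4 * 4 ^ (G.dist y a) := by
          rw [hup, pow_add]; ring
        rw [e3]
        omega
      · obtain ⟨t, hat, hct, ht⟩ := hquad y a c b hab' hbc'.symm hac (by omega) hup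
        have hrt : (G.deleteEdges J).Reachable a t := by
          by_contra hnr
          exact hac (unl hQM' hJ hat.symm hct.symm hnr (hrab.trans hrbc)).symm
        refine ⟨SimpleGraph.Walk.cons (deladj hQM' hJ hat hrt)
            (SimpleGraph.Walk.cons (deladj hQM' hJ hct.symm
              ((hrt.symm.trans hrab).trans hrbc)) W₂), ?_⟩
        simp only [wmes_cons, e2]
        have e3 : (4:ℕ) ^ (G.dist y b) = 16 * 4 ^ (G.dist y t) := by
          rw [← ht, pow_add]; ring
        have e6 : (4:ℕ) ^ (G.dist y a) = 4 * 4 ^ (G.dist y t) := by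
          have h5 : G.dist y t + 1 = G.dist y a := by omega
          rw [← h5, pow_add]; ring
        rw [e3, e6]
        omega
    · -- plateau at b, c
      obtain ⟨s, hbs, hcs, hs⟩ := htri y b c hbc' hcase.symm
      have hrs : (G.deleteEdges J).Reachable b s := by
        by_contra hnr
        exact hbc'.ne (unl hQM' hJ hbs.symm hcs.symm hnr hrbc).symm
      by_cases has : a = s
      · subst has
        refine ⟨SimpleGraph.Walk.cons (deladj hQM' hJ hcs.symm
          (hrs.symm.trans hrbc)) W₂, ?_⟩
        simp only [wmes_cons, e2]
        omega
      · obtain ⟨t, hat, hst, ht⟩ := hquad y a s b hab' hbs.symm has (by omega) hup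
        have hrt : (G.deleteEdges J).Reachable a t := by
          by_contra hnr
          exact has (unl hQM' hJ hat.symm hst.symm hnr (hrab.trans hrs)).symm
        refine ⟨SimpleGraph.Walk.cons (deladj hQM' hJ hat hrt)
          (SimpleGraph.Walk.cons (deladj hQM' hJ hst.symm (hrt.symm.trans (hrab.trans hrs)))
            (SimpleGraph.Walk.cons (deladj hQM' hJ hcs.symm
              (hrs.symm.trans hrbc)) W₂)), ?_⟩
        simp only [wmes_cons, e2]
        have e3 : (4:ℕ) ^ (G.dist y b) = 16 * 4 ^ (G.dist y t) := by
          rw [← ht, pow_add]; ring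
        have e4 : (4:ℕ) ^ (G.dist y s) = 4 * 4 ^ (G.dist y t) := by
          have h5 : G.dist y t + 1 = G.dist y s := by omega
          rw [← h5, pow_add]; ring
        rw [e3, e4]
        omega
    · -- going further up
      have hup2 : G.dist y c = G.dist y b + 1 := by omega
      have hlt1 : wmes G J y (SimpleGraph.Walk.cons hbc W₂) < N := by
        have g2 := wmes_cons G J y hab (SimpleGraph.Walk.cons hbc W₂)
        have hpos : 1 ≤ (4:ℕ) ^ (G.dist y a + 2) := Nat.one_le_pow _ _ (by norm_num)
        omega
      obtain ⟨W₂', hW₂'⟩ := IH _ hlt1 b c hbc W₂ le_rfl hup2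
      have hlt2 : wmes G J y (SimpleGraph.Walk.cons hab W₂') < N := by
        have g1 := wmes_cons G J y hab W₂'
        have g2 := wmes_cons G J y hab (SimpleGraph.Walk.cons hbc W₂)
        have hpos : 1 ≤ 11 * (4:ℕ) ^ (G.dist y c) := by
          have h6 : 1 ≤ (4:ℕ) ^ (G.dist y c) := Nat.one_le_pow _ _ (by norm_num)
          omega
        omega
      obtain ⟨W'', hW''⟩ := IH _ hlt2 a b hab W₂' le_rfl hup
      refine ⟨W'', ?_⟩
      have g1 := wmes_cons G J y hab W₂'
      have g2 := wmes_cons G J y hab (SimpleGraph.Walk.cons hbc W₂)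
      omega

lemma geo_lemma (hQM : QuasiMedian G) {J : Set (Sym2 V)} (hJ : IsHyperplane G J) (y : V) :
    ∀ N : ℕ, ∀ z : V, ∀ W : (G.deleteEdges J).Walk z y, wmes G J y W ≤ N →
      ∃ W' : (G.deleteEdges J).Walk z y, W'.length = G.dist z y := by
  obtain ⟨hc, hK4, hK32, htri, hquad⟩ := hQM
  have hQM' : QuasiMedian G := ⟨hc, hK4, hK32, htri, hquad⟩
  intro N
  induction N using Nat.strong_induction_on with
  | _ N IH =>
  intro z W hN
  by_cases hzy : z = y
  · subst hzy
    exact ⟨SimpleGraph.Walk.nil, by simp [SimpleGraph.dist_self]⟩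
  cases W with
  | nil => exact absurd rfl hzy
  | @cons _ b _ hzb W₁ =>
    have hzb' : G.Adj z b := (SimpleGraph.deleteEdges_adj.mp hzb).1
    have hd1 : G.dist y b ≤ G.dist y z + 1 := dist_le_adj' hc y hzb'
    have hd2 : G.dist y z ≤ G.dist y b + 1 := dist_le_adj' hc y hzb'.symm
    have hrzb : (G.deleteEdges J).Reachable z b := hzb.reachable
    have hrb : (G.deleteEdges J).Reachable b y := SimpleGraph.Walk.reachable W₁
    have hposz : 1 ≤ (4:ℕ) ^ (G.dist y z + 2) := Nat.one_le_pow _ _ (by norm_num)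
    rcases Nat.lt_trichotomy (G.dist y b) (G.dist y z) with hcase | hcase | hcase
    · -- descending: recurse on W₁
      have hlt : wmes G J y W₁ < N := by
        have g := wmes_cons G J y hzb W₁
        omega
      obtain ⟨W₁', hW₁'⟩ := IH _ hlt b W₁ le_rfl
      refine ⟨SimpleGraph.Walk.cons hzb W₁', ?_⟩
      have hdzy : G.dist z y = G.dist b y + 1 := by
        rw [SimpleGraph.dist_comm (u := z), SimpleGraph.dist_comm (u := b)]
        omega
      simp [hW₁', hdzy]
    · -- plateau at start
      obtain ⟨s, hzs, hbs, hs⟩ := htri y z b hzb' hcase.symm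
      have hrs : (G.deleteEdges J).Reachable z s := by
        by_contra hnr
        exact hzb'.ne (unl hQM' hJ hzs.symm hbs.symm hnr hrzb).symm
      have hsb : (G.deleteEdges J).Adj s b :=
        deladj hQM' hJ hbs.symm (hrs.symm.trans hrzb)
      have hup : G.dist y b = G.dist y s + 1 := by omega
      obtain ⟨W₂, hW₂⟩ := up_lemma hQM' hJ y (wmes G J y (SimpleGraph.Walk.cons hsb W₁))
        s b hsb W₁ le_rfl hup
      have hlt : wmes G J y (SimpleGraph.Walk.cons (deladj hQM' hJ hzs hrs) W₂) < N := by
        have g1 := wmes_cons G J y (deladj hQM' hJ hzs hrs) W₂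
        have g2 := wmes_cons G J y hsb W₁
        have g3 := wmes_cons G J y hzb W₁
        have e2 : (4:ℕ) ^ (G.dist y s + 2) = 16 * 4 ^ (G.dist y s) := by
          rw [pow_add]; ring
        have e4 : (4:ℕ) ^ (G.dist y b) = 4 * 4 ^ (G.dist y s) := by
          rw [hup, pow_add]; ring
        have hposs : 1 ≤ (4:ℕ) ^ (G.dist y s) := Nat.one_le_pow _ _ (by norm_num)
        rw [e2] at g2
        rw [e4] at hW₂
        omega
      obtain ⟨W', hW'⟩ := IH _ hlt z (SimpleGraph.Walk.cons (deladj hQM' hJ hzs hrs) W₂) le_rfl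
      exact ⟨W', hW'⟩
    · -- going up at start
      have hup : G.dist y b = G.dist y z + 1 := by omega
      obtain ⟨W₂, hW₂⟩ := up_lemma hQM' hJ y (wmes G J y (SimpleGraph.Walk.cons hzb W₁))
        z b hzb W₁ le_rfl hup
      have hlt : wmes G J y W₂ < N := by
        have hpos : 1 ≤ 11 * (4:ℕ) ^ (G.dist y b) := by
          have h6 : 1 ≤ (4:ℕ) ^ (G.dist y b) := Nat.one_le_pow _ _ (by norm_num)
          omega
        omega
      obtain ⟨W', hW'⟩ := IH _ hlt z W₂ le_rfl
      exact ⟨W', hW'⟩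

/-- within a sector, there is a neighbour one step closer to any other vertex
of the sector -/
lemma step_in_comp (hQM : QuasiMedian G) {J : Set (Sym2 V)} (hJ : IsHyperplane G J)
    {p z : V} (h : (G.deleteEdges J).Reachable z p) (hne : z ≠ p) :
    ∃ u, (G.deleteEdges J).Adj z u ∧ (G.deleteEdges J).Reachable u p ∧
      G.dist u p + 1 = G.dist z p := by
  obtain ⟨W⟩ := h
  obtain ⟨W', hW'⟩ := geo_lemma hQM hJ p (wmes G J p W) z W le_rfl
  cases W' with
  | nil => exact absurd rfl hne
  | @cons _ u _ hzu W₁ =>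
    have hzu' : G.Adj z u := (SimpleGraph.deleteEdges_adj.mp hzu).1
    refine ⟨u, hzu, SimpleGraph.Walk.reachable W₁, ?_⟩
    have h1 : G.dist u p ≤ W₁.length := by
      have h5 := SimpleGraph.dist_le (W₁.mapLe (SimpleGraph.deleteEdges_le J))
      simpa using h5
    have h2 : G.dist z p ≤ G.dist u p + 1 := by
      have h3 := (hQM.1).dist_triangle (u := z) (v := u) (w := p)
      rw [adj_dist_one' hzu'] at h3
      omega
    have h4 : W₁.length + 1 = G.dist z p := by
      simpa using hW'
    omega


/-! ### Intervals, convexity and gates of sectors -/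

lemma interval_mem (hQM : QuasiMedian G) {J : Set (Sym2 V)} (hJ : IsHyperplane G J) :
    ∀ n : ℕ, ∀ y z w : V, (G.deleteEdges J).Reachable y z → G.dist y z = n →
      G.Adj z w → G.dist y w + 1 = n → (G.deleteEdges J).Reachable y w := by
  intro n
  induction n using Nat.strong_induction_on with
  | _ n IH =>
  intro y z w hyz hn hzw hw
  have hc := hQM.1
  rcases Nat.lt_or_ge n 2 with hsmall | hbig
  · -- n ≤ 1, so dist y w = 0 and w = y
    have hw0 : G.dist y w = 0 := by omega
    have : w = y := (dist_zero_eq hc hw0).symm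
    subst this
    exact SimpleGraph.Reachable.refl w
  · have hzy : z ≠ y := by
      intro h; subst h
      rw [SimpleGraph.dist_self] at hn; omega
    obtain ⟨u, hzu, hru, hu⟩ := step_in_comp hQM hJ hyz.symm hzy
    have hzu' : G.Adj z u := (SimpleGraph.deleteEdges_adj.mp hzu).1
    have hdyu : G.dist y u + 1 = n := by
      have c1 : G.dist y u = G.dist u y := SimpleGraph.dist_comm
      have c2 : G.dist y z = G.dist z y := SimpleGraph.dist_comm
      omega
    have hyu : (G.deleteEdges J).Reachable y u := hyz.trans hzu.reachable
    by_cases hwu : w = u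
    · subst hwu; exact hyu
    obtain ⟨t, hwt, hut, ht⟩ := hQM.2.2.2.2 y w u z hzw.symm hzu'.symm hwu (by omega) (by omega)
    have hyt : (G.deleteEdges J).Reachable y t := by
      refine IH (n - 1) (by omega) y u t hyu (by omega) hut ?_
      omega
    by_contra hnw
    have hnzw : ¬ (G.deleteEdges J).Reachable z w := fun h => hnw (hyz.trans h)
    have := unl hQM hJ hzw.symm hwt hnzw ((hyz.symm.trans hyt) : _)
    -- this : t = z
    rw [this] at ht
    omega

lemma comp_convex (hQM : QuasiMedian G) {J : Set (Sym2 V)} (hJ : IsHyperplane G J) :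
    ∀ n : ℕ, ∀ y z p : V, (G.deleteEdges J).Reachable y z → G.dist p z = n →
      G.dist y p + G.dist p z = G.dist y z → (G.deleteEdges J).Reachable y p := by
  intro n
  induction n using Nat.strong_induction_on with
  | _ n IH =>
  intro y z p hyz hn hmid
  have hc := hQM.1
  rcases Nat.eq_zero_or_pos n with rfl | hpos
  · have : p = z := dist_zero_eq hc hn
    subst this; exact hyz
  obtain ⟨n', rfl⟩ : ∃ n', n = n' + 1 := ⟨n - 1, by omega⟩
  obtain ⟨cc, hzc, hpc⟩ := exists_adj_dist hc (hn : G.dist p z = n' + 1)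
  have hdyc : G.dist y cc + 1 = G.dist y z := by
    have h1 : G.dist y cc ≤ G.dist y p + G.dist p cc := hc.dist_triangle
    have h2 : G.dist y z ≤ G.dist y cc + 1 := dist_le_adj' hc y hzc.symm
    omega
  have hcF : (G.deleteEdges J).Reachable y cc :=
    interval_mem hQM hJ (G.dist y z) y z cc hyz rfl hzc hdyc
  exact IH n' (by omega) y cc p hcF hpc (by omega)

lemma sector_gate (hQM : QuasiMedian G) {J : Set (Sym2 V)} (hJ : IsHyperplane G J)
    (y₀ x : V) :
    ∃ p, (G.deleteEdges J).Reachable y₀ p ∧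
      ∀ y, (G.deleteEdges J).Reachable y₀ y → G.dist x y = G.dist x p + G.dist p y := by
  have hc := hQM.1
  have htri := hQM.2.2.2.1
  have hquad := hQM.2.2.2.2
  have hSne : {n | ∃ y, (G.deleteEdges J).Reachable y₀ y ∧ G.dist x y = n}.Nonempty :=
    ⟨G.dist x y₀, y₀, SimpleGraph.Reachable.refl y₀, rfl⟩
  obtain ⟨p, hp, hpr⟩ : ∃ yy, (G.deleteEdges J).Reachable y₀ yy ∧
      G.dist x yy = sInf {n | ∃ y, (G.deleteEdges J).Reachable y₀ y ∧ G.dist x y = n} :=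
    Nat.sInf_mem hSne
  have hmin : ∀ y, (G.deleteEdges J).Reachable y₀ y → G.dist x p ≤ G.dist x y := by
    intro y hy
    rw [hpr]
    exact Nat.sInf_le ⟨y, hy, rfl⟩
  refine ⟨p, hp, ?_⟩
  have key : ∀ s : ℕ, ∀ y, (G.deleteEdges J).Reachable y₀ y → G.dist p y = s →
      G.dist x y = G.dist x p + s := by
    intro s
    induction s using Nat.strong_induction_on with
    | _ s IH =>
    intro y hy hs
    rcases Nat.eq_zero_or_pos s with rfl | hposs
    · have : p = y := dist_zero_eq hc hs
      subst this; simp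
    obtain ⟨s', rfl⟩ : ∃ s', s = s' + 1 := ⟨s - 1, by omega⟩
    -- step A: no vertex at level s'+1 can have distance dist x p + s' - 1
    have stepA : ∀ yy, (G.deleteEdges J).Reachable y₀ yy → G.dist p yy = s' + 1 →
        ¬ (G.dist x yy + 1 = G.dist x p + s') := by
      intro yy hyy hlvl hbad
      rcases Nat.eq_zero_or_pos s' with rfl | hposs'
      · have := hmin yy hyy; omega
      obtain ⟨s'', rfl⟩ : ∃ s'', s' = s'' + 1 := ⟨s' - 1, by omega⟩
      -- u : one step from yy towards p
      have hyyp : (G.deleteEdges J).Reachable yy p := hyy.symm.trans hp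
      have hyyne : yy ≠ p := by
        intro h; subst h; rw [SimpleGraph.dist_self] at hlvl; omega
      obtain ⟨u, hyu, hur, hud⟩ := step_in_comp hQM hJ hyyp hyyne
      have hyu' : G.Adj yy u := (SimpleGraph.deleteEdges_adj.mp hyu).1
      have hulvl : G.dist p u = s'' + 1 := by
        have c1 : G.dist p u = G.dist u p := SimpleGraph.dist_comm
        have c2 : G.dist p yy = G.dist yy p := SimpleGraph.dist_comm
        omega
      have huF : (G.deleteEdges J).Reachable y₀ u := hyy.trans hyu.reachable
      have hdxu : G.dist x u = G.dist x p + (s'' + 1) := IH (s'' + 1) (by omega) u huF hulvl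
      -- q : one step from u towards p
      have hupr : (G.deleteEdges J).Reachable u p := hur
      have hune : u ≠ p := by
        intro h; subst h; rw [SimpleGraph.dist_self] at hulvl; omega
      obtain ⟨q, huq, hqr, hqd⟩ := step_in_comp hQM hJ hupr hune
      have huq' : G.Adj u q := (SimpleGraph.deleteEdges_adj.mp huq).1
      have hqlvl : G.dist p q = s'' := by
        have c1 : G.dist p q = G.dist q p := SimpleGraph.dist_comm
        have c2 : G.dist p u = G.dist u p := SimpleGraph.dist_comm
        omega
      have hqF : (G.deleteEdges J).Reachable y₀ q := huF.trans huq.reachable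
      have hdxq : G.dist x q = G.dist x p + s'' := IH s'' (by omega) q hqF hqlvl
      have hyyq : yy ≠ q := by
        intro h; subst h; omega
      obtain ⟨t, hyt, hqt, htd⟩ := hquad x yy q u hyu' huq'.symm hyyq (by omega) (by omega)
      have htF : (G.deleteEdges J).Reachable y₀ t := by
        by_contra hnt
        have hn1 : ¬ (G.deleteEdges J).Reachable yy t := fun h => hnt (hyy.trans h)
        have := unl hQM hJ hyt.symm hqt.symm hn1
          ((hyy.symm.trans hqF) : _)
        subst this
        omega
      have htlvl : G.dist p t = s'' + 1 := by
        have h1 : G.dist p t ≤ G.dist p q + 1 := dist_le_adj' hc p hqt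
        have h2 : G.dist p yy ≤ G.dist p t + 1 := dist_le_adj' hc p hyt.symm
        omega
      have := IH (s'' + 1) (by omega) t htF htlvl
      omega
    -- main case analysis
    have hyp2 : (G.deleteEdges J).Reachable y p := hy.symm.trans hp
    have hyne : y ≠ p := by
      intro h; subst h; rw [SimpleGraph.dist_self] at hs; omega
    obtain ⟨u, hyu, hur, hud⟩ := step_in_comp hQM hJ hyp2 hyne
    have hyu' : G.Adj y u := (SimpleGraph.deleteEdges_adj.mp hyu).1
    have hulvl : G.dist p u = s' := by
      have c1 : G.dist p u = G.dist u p := SimpleGraph.dist_comm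
      have c2 : G.dist p y = G.dist y p := SimpleGraph.dist_comm
      omega
    have huF : (G.deleteEdges J).Reachable y₀ u := hy.trans hyu.reachable
    have hdxu : G.dist x u = G.dist x p + s' := IH s' (by omega) u huF hulvl
    have hub : G.dist x y ≤ G.dist x p + (s' + 1) := by
      have h1 : G.dist x y ≤ G.dist x u + 1 := dist_le_adj' hc x hyu'.symm
      omega
    have hlb : G.dist x u ≤ G.dist x y + 1 := dist_le_adj' hc x hyu'
    rcases Nat.lt_trichotomy (G.dist x y) (G.dist x p + s') with hcs | hcs | hcs
    · exfalso
      exact stepA y hy hs (by omega)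
    · -- triangle situation
      exfalso
      obtain ⟨zz, hyz2, huz2, hz2⟩ := htri x y u hyu' (by omega)
      have hzzF : (G.deleteEdges J).Reachable y₀ zz := by
        by_contra hnt
        have hn1 : ¬ (G.deleteEdges J).Reachable y zz := fun h => hnt (hy.trans h)
        have := unl hQM hJ hyz2.symm huz2.symm hn1
          ((hy.symm.trans huF) : _)
        subst this
        exact hyu'.ne rfl
      have hzzlvl1 : G.dist p zz ≤ s' + 1 := by
        have h1 : G.dist p zz ≤ G.dist p u + 1 := dist_le_adj' hc p huz2
        omega
      have hzzlvl2 : s' ≤ G.dist p zz := by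
        have h2 : G.dist p y ≤ G.dist p zz + 1 := dist_le_adj' hc p hyz2.symm
        omega
      rcases Nat.eq_or_lt_of_le hzzlvl1 with heq | hlt
      · exact stepA zz hzzF heq (by omega)
      · have hzzlvl : G.dist p zz = s' := by omega
        have := IH s' (by omega) zz hzzF hzzlvl
        omega
    · omega
  intro y hy
  exact key (G.dist p y) y hy rfl


/-! ### Transversality from crossing configurations -/

lemma walk_transfer {J J' : Set (Sym2 V)} {x : V}
    (hvert : ∀ u, (G.deleteEdges J).Reachable x u → ∀ e ∈ J', u ∉ e) :
    ∀ {v}, (G.deleteEdges J).Reachable x v → (G.deleteEdges J').Reachable x v := by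
  have aux : ∀ {a b : V}, (G.deleteEdges J).Walk a b → (G.deleteEdges J).Reachable x a →
      (G.deleteEdges J').Reachable a b := by
    intro a b W
    induction W with
    | nil => intro _; exact SimpleGraph.Reachable.refl _
    | @cons a c b h p IH =>
      intro hxa
      have hG : G.Adj a c := (SimpleGraph.deleteEdges_adj.mp h).1
      have hnot : s(a, c) ∉ J' := by
        intro hmem
        exact hvert a hxa _ hmem (Sym2.mem_mk_left a c)
      have hadj : (G.deleteEdges J').Adj a c := SimpleGraph.deleteEdges_adj.mpr ⟨hG, hnot⟩
      exact hadj.reachable.trans (IH (hxa.trans h.reachable))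
  intro v hv
  obtain ⟨W⟩ := hv
  exact aux W (SimpleGraph.Reachable.refl x)

lemma exists_boundary {J : Set (Sym2 V)} {x v : V} (h : G.Reachable x v)
    (hv : ¬ (G.deleteEdges J).Reachable x v) :
    ∃ s t, G.Adj s t ∧ (G.deleteEdges J).Reachable x s ∧
      ¬ (G.deleteEdges J).Reachable x t := by
  have aux : ∀ {a b : V}, G.Walk a b → (G.deleteEdges J).Reachable x a →
      ¬ (G.deleteEdges J).Reachable x b → ∃ s t, G.Adj s t ∧
      (G.deleteEdges J).Reachable x s ∧ ¬ (G.deleteEdges J).Reachable x t := by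
    intro a b W
    induction W with
    | nil => intro h1 h2; exact absurd h1 h2
    | @cons a c b hac p IH =>
      intro h1 h2
      by_cases hc : (G.deleteEdges J).Reachable x c
      · exact IH hc h2
      · exact ⟨a, c, hac, h1, hc⟩
  obtain ⟨W⟩ := h
  exact aux W (SimpleGraph.Reachable.refl x) hv

lemma hyp_dichotomy (hQM : QuasiMedian G) {J J' : Set (Sym2 V)} (hJ : IsHyperplane G J)
    (hJ' : IsHyperplane G J') (hne : J ≠ J') :
    (Transverse G J J' ∧ Transverse G J' J) ∨
    ∃ w₀, ∀ e ∈ J', ∀ v ∈ e, (G.deleteEdges J).Reachable w₀ v := by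
  obtain ⟨e₀, he₀G, hJ'eq⟩ := hJ'
  obtain ⟨⟨a₀, b₀⟩, he₀⟩ := e₀.exists_rep
  have he₀' : e₀ = s(a₀, b₀) := he₀.symm
  subst he₀'
  subst hJ'eq
  have hJ'hyp : IsHyperplane G (hypClass G s(a₀, b₀)) := ⟨s(a₀, b₀), he₀G, rfl⟩
  have hnotJ : ∀ e ∈ hypClass G s(a₀, b₀), e ∉ J :=
    fun e heJ' heJ => hyp_disjoint hJ hJ'hyp hne heJ heJ'
  have hadj₀ : G.Adj a₀ b₀ := (SimpleGraph.mem_edgeSet _).mp he₀G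
  have hstep2 : ∀ u w : V, G.Adj u w → s(u, w) ∈ hypClass G s(a₀, b₀) →
      (G.deleteEdges J).Adj u w := fun u w huw hm =>
    SimpleGraph.deleteEdges_adj.mpr ⟨huw, hnotJ _ hm⟩
  have main : ∀ e', Relation.ReflTransGen (hypStep G) s(a₀, b₀) e' →
      (Transverse G J (hypClass G s(a₀, b₀)) ∧ Transverse G (hypClass G s(a₀, b₀)) J) ∨
      (∀ v ∈ e', (G.deleteEdges J).Reachable a₀ v) := by
    intro e' h
    induction h with
    | refl =>
      right
      intro v hv
      rcases Sym2.mem_iff.mp hv with rfl | rfl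
      · exact SimpleGraph.Reachable.refl _
      · exact (hstep2 _ _ hadj₀ (mem_hypClass_self _ _)).reachable
    | @tail e₁ e₂ h₁ h₂ IH =>
      rcases IH with hTT | hbase
      · left; exact hTT
      have he₁J' : e₁ ∈ hypClass G s(a₀, b₀) := h₁
      have he₂J' : e₂ ∈ hypClass G s(a₀, b₀) := h₁.tail h₂
      rcases h₂ with ⟨a, b, c, hab, hbc, hac, hm₁, hm₂⟩ |
        ⟨a, b, c, d, hab, hbc, hcd, hda, hacne, hbdne, he₁, he₂⟩
      · -- triangle case
        right
        have hstepany : ∀ f ∈ ({s(a, b), s(b, c), s(a, c)} : Set (Sym2 V)),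
            f ∈ hypClass G s(a₀, b₀) :=
          fun f hf => h₁.tail (Or.inl ⟨a, b, c, hab, hbc, hac, hm₁, hf⟩)
        have e_ab := hstepany s(a, b) (by simp)
        have e_bc := hstepany s(b, c) (by simp)
        have e_ac := hstepany s(a, c) (by simp)
        have habc : (G.deleteEdges J).Reachable a₀ a ∧ (G.deleteEdges J).Reachable a₀ b ∧
            (G.deleteEdges J).Reachable a₀ c := by
          simp only [Set.mem_insert_iff, Set.mem_singleton_iff] at hm₁
          rcases hm₁ with he | he | he
          · have ha := hbase a (by rw [he]; exact Sym2.mem_mk_left a b)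
            have hb := hbase b (by rw [he]; exact Sym2.mem_mk_right a b)
            exact ⟨ha, hb, ha.trans (hstep2 a c hac e_ac).reachable⟩
          · have hb := hbase b (by rw [he]; exact Sym2.mem_mk_left b c)
            have hcr := hbase c (by rw [he]; exact Sym2.mem_mk_right b c)
            exact ⟨hb.trans (hstep2 a b hab e_ab).symm.reachable, hb, hcr⟩
          · have ha := hbase a (by rw [he]; exact Sym2.mem_mk_left a c)
            have hcr := hbase c (by rw [he]; exact Sym2.mem_mk_right a c)
            exact ⟨ha, ha.trans (hstep2 a b hab e_ab).reachable, hcr⟩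
        intro v hv
        have hv3 : v = a ∨ v = b ∨ v = c := by
          simp only [Set.mem_insert_iff, Set.mem_singleton_iff] at hm₂
          rcases hm₂ with he | he | he <;> rw [he] at hv <;>
            rcases Sym2.mem_iff.mp hv with rfl | rfl <;> tauto
        rcases hv3 with rfl | rfl | rfl
        · exact habc.1
        · exact habc.2.1
        · exact habc.2.2
      · -- square case
        subst he₁
        subst he₂
        by_cases hbcJ : s(b, c) ∈ J
        · by_cases hadJ : s(a, d) ∈ J
          · left
            constructor
            · exact ⟨hne, a, b, hab, he₁J',
                ⟨s(a, d), hadJ, Sym2.mem_mk_left a d⟩, ⟨s(b, c), hbcJ, Sym2.mem_mk_left b c⟩⟩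
            · exact ⟨hne.symm, b, c, hbc, hbcJ,
                ⟨s(a, b), he₁J', Sym2.mem_mk_right a b⟩, ⟨s(d, c), he₂J', Sym2.mem_mk_right d c⟩⟩
          · right
            have hra : (G.deleteEdges J).Reachable a₀ a :=
              hbase a (Sym2.mem_mk_left a b)
            have hrd : (G.deleteEdges J).Reachable a₀ d := by
              refine hra.trans (SimpleGraph.Adj.reachable ?_)
              exact SimpleGraph.deleteEdges_adj.mpr ⟨hda.symm, hadJ⟩
            have hrc : (G.deleteEdges J).Reachable a₀ c :=
              hrd.trans (hstep2 d c hcd.symm he₂J').reachable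
            intro v hv
            rcases Sym2.mem_iff.mp hv with rfl | rfl
            · exact hrd
            · exact hrc
        · right
          have hrb : (G.deleteEdges J).Reachable a₀ b :=
            hbase b (Sym2.mem_mk_right a b)
          have hrc : (G.deleteEdges J).Reachable a₀ c := by
            refine hrb.trans (SimpleGraph.Adj.reachable ?_)
            exact SimpleGraph.deleteEdges_adj.mpr ⟨hbc, hbcJ⟩
          have hrd : (G.deleteEdges J).Reachable a₀ d :=
            hrc.trans (hstep2 d c hcd.symm he₂J').symm.reachable
          intro v hv
          rcases Sym2.mem_iff.mp hv with rfl | rfl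
          · exact hrd
          · exact hrc
  by_cases hT : (Transverse G J (hypClass G s(a₀, b₀)) ∧
      Transverse G (hypClass G s(a₀, b₀)) J)
  · exact Or.inl hT
  · right
    refine ⟨a₀, fun e he v hv => ?_⟩
    rcases main e he with h | h
    · exact absurd h hT
    · exact h v hv

lemma transverse_of_config (hQM : QuasiMedian G) {J J' : Set (Sym2 V)}
    (hJ : IsHyperplane G J) (hJ' : IsHyperplane G J') (hne : J ≠ J')
    {A B : Set V} (hA : IsSectorOf G J A) (hB : IsSectorOf G J' B)
    (hAB : (A ∩ B).Nonempty) (hab : ∃ a ∈ A, a ∉ B) (hba : ∃ b ∈ B, b ∉ A)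
    (hout : ∃ x, x ∉ A ∧ x ∉ B) :
    Transverse G J J' ∧ Transverse G J' J := by
  obtain ⟨vA, rfl⟩ := hA
  obtain ⟨vB, rfl⟩ := hB
  obtain ⟨z, hzA, hzB⟩ := hAB
  obtain ⟨a, haA, haB⟩ := hab
  obtain ⟨b, hbB, hbA⟩ := hba
  obtain ⟨x, hxA, hxB⟩ := hout
  simp only [Set.mem_setOf_eq] at hzA hzB haA haB hbB hbA hxA hxB
  rcases hyp_dichotomy hQM hJ hJ' hne with hTT | ⟨w₀, hw₀⟩
  · exact hTT
  rcases hyp_dichotomy hQM hJ' hJ hne.symm with hTT | ⟨w₀', hw₀'⟩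
  · exact ⟨hTT.2, hTT.1⟩
  exfalso
  have hvJ'A : ∀ e ∈ J', ∀ v ∈ e, (G.deleteEdges J).Reachable vA v := by
    by_cases hTA : (G.deleteEdges J).Reachable vA w₀
    · exact fun e he v hv => hTA.trans (hw₀ e he v hv)
    · exfalso
      have hcond : ∀ u, (G.deleteEdges J).Reachable z u → ∀ e ∈ J', u ∉ e := by
        intro u hu e he hue
        exact hTA ((hzA.trans hu).trans (hw₀ e he u hue).symm)
      have htr := walk_transfer (G := G) (J := J) (J' := J') hcond
        ((hzA.symm.trans haA) : (G.deleteEdges J).Reachable z a)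
      exact haB (hzB.trans htr)
  have hvJB : ∀ e ∈ J, ∀ v ∈ e, (G.deleteEdges J').Reachable vB v := by
    by_cases hTB : (G.deleteEdges J').Reachable vB w₀'
    · exact fun e he v hv => hTB.trans (hw₀' e he v hv)
    · exfalso
      have hcond : ∀ u, (G.deleteEdges J').Reachable z u → ∀ e ∈ J, u ∉ e := by
        intro u hu e he hue
        exact hTB ((hzB.trans hu).trans (hw₀' e he u hue).symm)
      have htr := walk_transfer (G := G) (J := J') (J' := J) hcond
        ((hzB.symm.trans hbB) : (G.deleteEdges J').Reachable z b)
      exact hbA (hzA.trans htr)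
  have hS2S' : ∀ v, (G.deleteEdges J).Reachable x v → (G.deleteEdges J').Reachable x v := by
    refine fun v hv => walk_transfer ?_ hv
    intro u hu e he hue
    exact hxA ((hvJ'A e he u hue).trans hu.symm)
  have hS'2S : ∀ v, (G.deleteEdges J').Reachable x v → (G.deleteEdges J).Reachable x v := by
    refine fun v hv => walk_transfer ?_ hv
    intro u hu e he hue
    exact hxB ((hvJB e he u hue).trans hu.symm)
  have hxz : G.Reachable x z := (hQM.1).preconnected x z
  have hnz : ¬ (G.deleteEdges J).Reachable x z := fun h => hxA (hzA.trans h.symm)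
  obtain ⟨s, t, hst, hxs, hxt⟩ := exists_boundary hxz hnz
  have hstJ : s(s, t) ∈ J := by
    by_contra h
    exact hxt (hxs.trans (SimpleGraph.deleteEdges_adj.mpr ⟨hst, h⟩).reachable)
  have hstJ' : s(s, t) ∈ J' := by
    by_contra h
    refine hxt (hS'2S t ?_)
    exact (hS2S' s hxs).trans (SimpleGraph.deleteEdges_adj.mpr ⟨hst, h⟩).reachable
  exact hyp_disjoint hJ hJ' hne hstJ hstJ'

lemma exists_minimal_sector (σ : Set (Sym2 V) → Set V)
    (hChain : ∀ f : ℕ → Set (Sym2 V), (∀ k, IsHyperplane G (f k)) →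
      (∀ k, σ (f (k + 1)) ⊆ σ (f k)) → ∃ K, ∀ k, K ≤ k → σ (f k) = σ (f K))
    (𝒜 : Set (Set (Sym2 V))) (h𝒜 : ∀ J ∈ 𝒜, IsHyperplane G J)
    (hne : 𝒜.Nonempty) :
    ∃ J₀ ∈ 𝒜, ∀ J ∈ 𝒜, σ J ⊆ σ J₀ → σ J = σ J₀ := by
  by_contra h
  push_neg at h
  have h' : ∀ J₀, J₀ ∈ 𝒜 → ∃ J, J ∈ 𝒜 ∧ σ J ⊆ σ J₀ ∧ σ J ≠ σ J₀ := by
    intro J₀ hJ₀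
    obtain ⟨J, hJ, hsub, hne'⟩ := h J₀ hJ₀
    exact ⟨J, hJ, hsub, hne'⟩
  choose! g hg1 hg2 hg3 using h'
  obtain ⟨J₀, hJ₀⟩ := hne
  let f : ℕ → Set (Sym2 V) := fun n => g^[n] J₀
  have hf0 : f 0 = J₀ := rfl
  have hfs : ∀ n, f (n + 1) = g (f n) := fun n => Function.iterate_succ_apply' g n J₀
  have hmem : ∀ n, f n ∈ 𝒜 := by
    intro n
    induction n with
    | zero => exact hJ₀
    | succ n ih => rw [hfs]; exact hg1 _ ih
  obtain ⟨K, hK⟩ := hChain f (fun k => h𝒜 _ (hmem k)) (fun k => by rw [hfs]; exact hg2 _ (hmem k))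
  have h1 := hK (K + 1) (by omega)
  have h2 : σ (f (K + 1)) ≠ σ (f K) := by rw [hfs]; exact hg3 _ (hmem K)
  exact h2 h1


end QMwork

/-- In a quasi-median graph of finite cubical dimension, if a sector `σ J` is chosen for
every hyperplane `J` such that any two chosen sectors intersect and every non-increasing
sequence of chosen sectors is eventually constant, then the intersection of all chosen
sectors consists of exactly one vertex. -/
theorem stmt10 {V : Type*} (G : SimpleGraph V) (hG : QuasiMedian G)
    (D : ℕ)
    (hD : ∀ S : Finset (Set (Sym2 V)), (∀ J ∈ S, IsHyperplane G J) →
      (∀ J ∈ S, ∀ J' ∈ S, J ≠ J' → Transverse G J J') → S.card ≤ D)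
    (σ : Set (Sym2 V) → Set V)
    (hσ : ∀ J, IsHyperplane G J → IsSectorOf G J (σ J))
    (hInter : ∀ J1 J2, IsHyperplane G J1 → IsHyperplane G J2 → (σ J1 ∩ σ J2).Nonempty)
    (hChain : ∀ f : ℕ → Set (Sym2 V), (∀ k, IsHyperplane G (f k)) →
      (∀ k, σ (f (k + 1)) ⊆ σ (f k)) → ∃ K, ∀ k, K ≤ k → σ (f k) = σ (f K)) :
    ∃! v : V, ∀ J, IsHyperplane G J → v ∈ σ J := by
  classical
  have hQM := hG
  have hc : G.Connected := hQM.1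
  have hSecNe : ∀ J, IsHyperplane G J → (σ J).Nonempty := by
    intro J hJ
    obtain ⟨w, hw, _⟩ := hInter J J hJ hJ
    exact ⟨w, hw⟩
  have hSecComp : ∀ J, IsHyperplane G J → ∀ v ∈ σ J,
      σ J = {w | (G.deleteEdges J).Reachable v w} := by
    intro J hJ v hv
    obtain ⟨v₀, h₀⟩ := hσ J hJ
    have hv₀v : (G.deleteEdges J).Reachable v₀ v := by
      rw [h₀] at hv; exact hv
    rw [h₀]
    ext w
    simp only [Set.mem_setOf_eq]
    exact ⟨fun h => hv₀v.symm.trans h, fun h => hv₀v.trans h⟩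
  have gate_step : ∀ J₁, IsHyperplane G J₁ → ∀ x : V, ∃ p, p ∈ σ J₁ ∧
      ∀ J, IsHyperplane G J → x ∈ σ J → p ∈ σ J := by
    intro J₁ hJ₁ x
    obtain ⟨y₀, hy₀⟩ := hSecNe J₁ hJ₁
    have hσJ₁ : σ J₁ = {w | (G.deleteEdges J₁).Reachable y₀ w} := hSecComp J₁ hJ₁ y₀ hy₀
    obtain ⟨p, hpreach, hgate⟩ := sector_gate hQM hJ₁ y₀ x
    refine ⟨p, by rw [hσJ₁]; exact hpreach, ?_⟩
    intro J hJ hxJ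
    obtain ⟨z, hz1, hz2⟩ := hInter J J₁ hJ hJ₁
    have hzreach : (G.deleteEdges J₁).Reachable y₀ z := by rw [hσJ₁] at hz2; exact hz2
    have hdist : G.dist x z = G.dist x p + G.dist p z := hgate z hzreach
    have hσJ : σ J = {w | (G.deleteEdges J).Reachable x w} := hSecComp J hJ x hxJ
    have hxz : (G.deleteEdges J).Reachable x z := by rw [hσJ] at hz1; exact hz1
    have hp := comp_convex hQM hJ (G.dist p z) x z p hxz rfl hdist.symm
    rw [hσJ]
    exact hp
  have hex : ∃ v : V, ∀ J, IsHyperplane G J → v ∈ σ J := by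
    by_contra hno
    push_neg at hno
    have hVne : Nonempty V := hc.nonempty
    have hminsel : ∀ v : V, ∃ J₀, (IsHyperplane G J₀ ∧ v ∉ σ J₀) ∧
        ∀ J, (IsHyperplane G J ∧ v ∉ σ J) → σ J ⊆ σ J₀ → σ J = σ J₀ := by
      intro v
      obtain ⟨J₁, hJ₁, hv₁⟩ := hno v
      obtain ⟨J₀, hJ₀, hmin⟩ := exists_minimal_sector σ hChain
        {J | IsHyperplane G J ∧ v ∉ σ J} (fun J hJ => hJ.1) ⟨J₁, hJ₁, hv₁⟩
      exact ⟨J₀, hJ₀, fun J hJ => hmin J hJ⟩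
    choose Jmin hJmin hJminmin using hminsel
    have hstep : ∀ v : V, ∃ p, p ∈ σ (Jmin v) ∧
        ∀ J, IsHyperplane G J → v ∈ σ J → p ∈ σ J :=
      fun v => gate_step (Jmin v) (hJmin v).1 v
    choose nxt hnxt1 hnxt2 using hstep
    let X : ℕ → V := fun n => nxt^[n] (Classical.arbitrary V)
    have hXsucc : ∀ n, X (n + 1) = nxt (X n) := fun n =>
      Function.iterate_succ_apply' nxt n _
    have hmono1 : ∀ k J, IsHyperplane G J → X k ∈ σ J → X (k + 1) ∈ σ J := by
      intro k J hJ h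
      rw [hXsucc]
      exact hnxt2 (X k) J hJ h
    have hmono : ∀ j k, j ≤ k → ∀ J, IsHyperplane G J → X j ∈ σ J → X k ∈ σ J := by
      intro j k hjk J hJ h
      induction k, hjk using Nat.le_induction with
      | base => exact h
      | succ k hk ih => exact hmono1 k J hJ ih
    have hnotin : ∀ k, X k ∉ σ (Jmin (X k)) := fun k => (hJmin (X k)).2
    have hJshyp : ∀ k, IsHyperplane G (Jmin (X k)) := fun k => (hJmin (X k)).1
    have hinJ : ∀ k, X (k + 1) ∈ σ (Jmin (X k)) := by
      intro k; rw [hXsucc]; exact hnxt1 (X k)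
    have hnotin' : ∀ j k, j ≤ k → X j ∉ σ (Jmin (X k)) := by
      intro j k hjk h
      exact hnotin k (hmono j k hjk (Jmin (X k)) (hJshyp k) h)
    have hσne : ∀ j k, j < k → σ (Jmin (X j)) ≠ σ (Jmin (X k)) := by
      intro j k hjk heq
      have h1 : X (j + 1) ∈ σ (Jmin (X j)) := hinJ j
      rw [heq] at h1
      exact hnotin' (j + 1) k (by omega) h1
    have hJsne : ∀ j k, j < k → Jmin (X j) ≠ Jmin (X k) := by
      intro j k hjk h
      exact hσne j k hjk (by rw [h])
    have htrans : ∀ j k, j < k →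
        Transverse G (Jmin (X j)) (Jmin (X k)) ∧ Transverse G (Jmin (X k)) (Jmin (X j)) := by
      intro j k hjk
      refine transverse_of_config hQM (hJshyp j) (hJshyp k) (hJsne j k hjk)
        (hσ _ (hJshyp j)) (hσ _ (hJshyp k)) (hInter _ _ (hJshyp j) (hJshyp k)) ?_ ?_ ?_
      · exact ⟨X (j + 1), hinJ j, hnotin' (j + 1) k (by omega)⟩
      · have hmin := hJminmin (X j) (Jmin (X k)) ⟨hJshyp k, hnotin' j k (le_of_lt hjk)⟩
        have hnsub : ¬ σ (Jmin (X k)) ⊆ σ (Jmin (X j)) := by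
          intro hsub
          exact hσne j k hjk (hmin hsub).symm
        obtain ⟨b, hb1, hb2⟩ := Set.not_subset.mp hnsub
        exact ⟨b, hb1, hb2⟩
      · exact ⟨X j, hnotin' j j le_rfl, hnotin' j k (le_of_lt hjk)⟩
    have hinj : Set.InjOn (fun n => Jmin (X n)) ↑(Finset.range (D + 1)) := by
      intro j _ k _ hjk
      by_contra hne2
      rcases Nat.lt_or_ge j k with h | h
      · exact hJsne j k h hjk
      · have h' : k < j := by omega
        exact hJsne k j h' hjk.symm
    have hcard : ((Finset.range (D + 1)).image (fun n => Jmin (X n))).card = D + 1 := by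
      rw [Finset.card_image_of_injOn hinj, Finset.card_range]
    have hle := hD ((Finset.range (D + 1)).image (fun n => Jmin (X n)))
      (by intro J hJ
          obtain ⟨k, hk, rfl⟩ := Finset.mem_image.mp hJ
          exact hJshyp k)
      (by intro J hJ J' hJ' hne2
          obtain ⟨k, hk, rfl⟩ := Finset.mem_image.mp hJ
          obtain ⟨k', hk', rfl⟩ := Finset.mem_image.mp hJ'
          rcases Nat.lt_trichotomy k k' with h | h | h
          · exact (htrans k k' h).1
          · exact absurd (by rw [h]) hne2
          · exact (htrans k' k h).2)
    omega
  obtain ⟨v, hv⟩ := hex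
  refine ⟨v, hv, ?_⟩
  intro w hw
  by_contra hwv
  have hpos : 0 < G.dist w v := hc.pos_dist_of_ne hwv
  obtain ⟨n, hn⟩ : ∃ n, G.dist w v = n + 1 := ⟨G.dist w v - 1, by omega⟩
  obtain ⟨v₁, hadj, hdist⟩ := exists_adj_dist hc hn
  have hJhyp : IsHyperplane G (hypClass G s(v, v₁)) :=
    ⟨s(v, v₁), (SimpleGraph.mem_edgeSet _).mpr hadj, rfl⟩
  have hσJ : σ (hypClass G s(v, v₁)) =
      {u | (G.deleteEdges (hypClass G s(v, v₁))).Reachable v u} :=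
    hSecComp _ hJhyp v (hv _ hJhyp)
  have hvw : (G.deleteEdges (hypClass G s(v, v₁))).Reachable v w := by
    have hmem := hw _ hJhyp
    rw [hσJ] at hmem
    exact hmem
  obtain ⟨S, hvK, hv₁K⟩ := gatesys_exists hQM hadj
  have hgvw : S.gw v = S.gw w := gw_const_of_reachable hQM S hvK hv₁K hadj.ne hvw
  have hgv : S.gw v = v := S.self_mem hc hvK
  have h2 := S.gate w v₁ hv₁K
  rw [← hgvw, hgv] at h2
  have h3 : G.dist v v₁ = 1 := adj_dist_one' hadj
  omega
end

section
/- Let X be a graph (not necessarily one-ended) and n ≥ 2 an integer. The lamplighter graph L_n(X) is coarsely simply connected if and only if X is bounded. -/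
open SimpleGraph

/-- The lamplighter graph `L_n(X)`: vertices are pairs of a finitely supported
colouring `V → ZMod n` and a vertex; edges either move the arrow along an edge of
the base graph keeping the colouring, or change the colouring exactly at the
position of the arrow. -/
def lamp {V : Type*} (n : ℕ) (G : SimpleGraph V) :
    SimpleGraph ((V →₀ ZMod n) × V) where
  Adj x y := (x.1 = y.1 ∧ G.Adj x.2 y.2) ∨
    (x.2 = y.2 ∧ x.1 ≠ y.1 ∧ ∀ v, v ≠ x.2 → x.1 v = y.1 v)
  symm := ⟨by
    rintro ⟨c1, p1⟩ ⟨c2, p2⟩ (⟨hc, hp⟩ | ⟨hp, hcne, hv⟩)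
    · exact Or.inl ⟨hc.symm, hp.symm⟩
    · exact Or.inr ⟨hp.symm, hcne.symm,
        fun v hv2 => (hv v (by rw [hp]; exact hv2)).symm⟩⟩
  loopless := ⟨by
    rintro ⟨c, p⟩ (⟨_, hp⟩ | ⟨_, hcne, _⟩)
    · exact G.loopless.irrefl p hp
    · exact hcne rfl⟩

/-- A list of vertices is a chain if consecutive entries are equal or adjacent. -/
def IsGChain {V : Type*} (G : SimpleGraph V) (l : List V) : Prop :=
  l.Chain' (fun u v => u = v ∨ G.Adj u v)

/-- An elementary homotopy at scale `R`: replace a segment `s` of a loop by another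
segment `s'` with the same endpoints, so that the cycle formed by `s` and `s'` has
length at most `R`. -/
def ElemMove {V : Type*} (G : SimpleGraph V) (R : ℕ) (l l' : List V) : Prop :=
  ∃ pre s s' post : List V,
    l = pre ++ s ++ post ∧ l' = pre ++ s' ++ post ∧
    IsGChain G s ∧ IsGChain G s' ∧ s.head? = s'.head? ∧ s.getLast? = s'.getLast? ∧
    s.length + s'.length ≤ R

/-- A graph is coarsely simply connected if, for some `R ≥ 0`, every loop can be
contracted to a point by elementary homotopies across cycles of length at most `R`,
i.e. the 2-complex obtained by filling in all cycles of length `≤ R` with discs is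
simply connected. -/
def CoarselySimplyConnected {V : Type*} (G : SimpleGraph V) : Prop :=
  ∃ R : ℕ, ∀ (a : V) (l : List V), IsGChain G l → l.head? = some a →
    l.getLast? = some a → Relation.ReflTransGen (ElemMove G R) l [a]

/-!
If `X` has diameter `D`, resetting a single lamp `u` to its value at the base point maps every
loop of `L_n(X)` to a loop, and the two are homotopic: slide the loop onto its image along the
rungs "walk to `u`, toggle, walk back" of length `≤ 2D + 1`, through squares of length
`≤ 4D + 6`. Resetting, one after the other, all lamps the loop touches leaves a loop with constant
lamps, which is coned off to the base point along geodesics.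

Conversely, for lamps `u`, `v` the sum of `(Δ c_u) · c_v` along a loop (a discrete `∮ c_v dc_u`)
is unchanged by a move across a cycle of length `≤ R` once `d(u, v) > 2R`: such a cycle misses `u`
(and the sum over it vanishes) or misses `v` (and the sum telescopes). The commutator of the lamps
at `u` and `v` has sum `-1`, so if `X` is unbounded no `R` contracts all loops.
-/

section CoarseHomotopy

variable {W : Type*} {H : SimpleGraph W} {R K : ℕ}

abbrev CoarselyHomotopic (H : SimpleGraph W) (R : ℕ) : List W → List W → Prop :=
  Relation.ReflTransGen (ElemMove H R)

theorem IsGChain.append {l₁ l₂ : List W} {x y : W} (h₁ : IsGChain H l₁) (h₂ : IsGChain H l₂)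
    (hx : l₁.getLast? = some x) (hy : l₂.head? = some y) (hxy : x = y ∨ H.Adj x y) :
    IsGChain H (l₁ ++ l₂) :=
  List.IsChain.append h₁ h₂ fun x' hx' y' hy' => by
    rw [hx, Option.mem_some_iff] at hx'
    rw [hy, Option.mem_some_iff] at hy'
    exact hx' ▸ hy' ▸ hxy

theorem IsGChain.map {W' : Type*} {H' : SimpleGraph W'} {f : W → W'}
    (hf : ∀ ⦃x y⦄, H.Adj x y → f x = f y ∨ H'.Adj (f x) (f y)) {l : List W}
    (hl : IsGChain H l) : IsGChain H' (l.map f) :=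
  (List.isChain_map f).mpr <| hl.imp fun _ _ hxy => hxy.elim (fun h => Or.inl (h ▸ rfl)) (hf ·)

theorem IsGChain.exists_walk {l : List W} {a p : W} (hl : IsGChain H l)
    (ha : l.head? = some a) (hp : p ∈ l) : ∃ w : H.Walk a p, w.length < l.length := by
  induction l generalizing a with
  | nil => simp at hp
  | cons x l ih =>
    obtain rfl : x = a := by simpa using ha
    rcases List.mem_cons.mp hp with rfl | hp
    · exact ⟨Walk.nil, by simp⟩
    obtain ⟨y, l, rfl⟩ := List.exists_cons_of_ne_nil (List.ne_nil_of_mem hp)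
    obtain ⟨hxy, hl⟩ := List.isChain_cons_cons.mp hl
    obtain ⟨w, hw⟩ := ih hl rfl hp
    rcases hxy with rfl | hxy
    · exact ⟨w, by simp only [List.length_cons] at hw ⊢; omega⟩
    · exact ⟨Walk.cons hxy w, by simp only [Walk.length_cons, List.length_cons] at hw ⊢; omega⟩

theorem IsGChain.exists_walk_of_mem_append {s s' : List W} {a p : W} (hs : IsGChain H s)
    (hs' : IsGChain H s') (ha : s.head? = some a) (ha' : s'.head? = some a) (hp : p ∈ s ++ s') :
    ∃ w : H.Walk a p, w.length + 2 ≤ s.length + s'.length := by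
  have h₁ : 0 < s.length := List.length_pos_of_ne_nil (by rintro rfl; simp at ha)
  have h₂ : 0 < s'.length := List.length_pos_of_ne_nil (by rintro rfl; simp at ha')
  rcases List.mem_append.mp hp with hp | hp
  · obtain ⟨w, hw⟩ := hs.exists_walk ha hp
    exact ⟨w, by omega⟩
  · obtain ⟨w, hw⟩ := hs'.exists_walk ha' hp
    exact ⟨w, by omega⟩

theorem SimpleGraph.Walk.isGChain_support {x y : W} (w : H.Walk x y) : IsGChain H w.support :=
  w.isChain_adj_support.imp fun _ _ h => Or.inr h

theorem SimpleGraph.Walk.head?_support {x y : W} (w : H.Walk x y) :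
    w.support.head? = some x := by
  rw [← w.cons_tail_support]; rfl

theorem SimpleGraph.Walk.getLast?_support {x y : W} (w : H.Walk x y) :
    w.support.getLast? = some y := by
  rw [List.getLast?_eq_some_getLast w.support_ne_nil, w.getLast_support]

theorem ElemMove.append {l l' : List W} (h : ElemMove H R l l') (pre post : List W) :
    ElemMove H R (pre ++ l ++ post) (pre ++ l' ++ post) := by
  obtain ⟨pre', s, s', post', rfl, rfl, h⟩ := h
  exact ⟨pre ++ pre', s, s', post' ++ post, by simp, by simp, h⟩

theorem elemMove_of_isGChain {s s' : List W} (hs : IsGChain H s) (hs' : IsGChain H s')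
    (hh : s.head? = s'.head?) (hl : s.getLast? = s'.getLast?)
    (hlen : s.length + s'.length ≤ R) : ElemMove H R s s' :=
  ⟨[], s, s', [], by simp, by simp, hs, hs', hh, hl, hlen⟩

theorem CoarselyHomotopic.append {l l' : List W} (h : CoarselyHomotopic H R l l')
    (pre post : List W) : CoarselyHomotopic H R (pre ++ l ++ post) (pre ++ l' ++ post) :=
  Relation.ReflTransGen.lift (fun l => pre ++ l ++ post) (fun _ _ hm => hm.append pre post) _ _ h

theorem coarselyHomotopic_singleton_of_length_le {l : List W} {a : W} (hl : IsGChain H l)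
    (hh : l.head? = some a) (hlast : l.getLast? = some a) (hlen : l.length + 1 ≤ R) :
    CoarselyHomotopic H R l [a] :=
  .single <| elemMove_of_isGChain hl (List.isChain_singleton a) (by simpa using hh)
    (by simpa using hlast) (by simpa using hlen)

theorem coarselyHomotopic_replicate (hR : 3 ≤ R) (a : W) :
    ∀ k, CoarselyHomotopic H R (List.replicate (k + 1) a) [a]
  | 0 => .refl
  | k + 1 => by
    have hstutter : ElemMove H R [a, a] [a] :=
      elemMove_of_isGChain (List.isChain_pair.mpr (Or.inl rfl)) (List.isChain_singleton a)
        rfl rfl (by simpa using hR)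
    have hmove := hstutter.append [] (List.replicate k a)
    simp only [List.nil_append, List.cons_append] at hmove
    exact .head hmove (coarselyHomotopic_replicate hR a k)

/-- Sliding a loop along the rungs `φ p ⟶ p` onto its image under `φ`: each square formed by
a step `r ⟶ m`, its image `φ r ⟶ φ m` and the two rungs has length at most `2 K + 4`. -/
theorem coarselyHomotopic_ladder {φ : W → W}
    (hφ : ∀ ⦃x y⦄, H.Adj x y → φ x = φ y ∨ H.Adj (φ x) (φ y)) (hR : 2 * K + 4 ≤ R) :
    ∀ (M : List W) (r z : W) (w : H.Walk (φ r) r), w.length ≤ K →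
      IsGChain H (r :: M) → (r :: M).getLast? = some z →
      (∀ p ∈ M, ∃ w : H.Walk (φ p) p, w.length ≤ K) →
      ∃ w' : H.Walk (φ z) z, w'.length ≤ K ∧
        CoarselyHomotopic H R (w.support ++ M) ((r :: M).dropLast.map φ ++ w'.support)
  | [], r, z, w, hw, _, hz, _ => by
    obtain rfl : r = z := by simpa using hz
    exact ⟨w, hw, by simpa using .refl⟩
  | m :: M, r, z, w, hw, hc, hz, hrung => by
    obtain ⟨hrm, hc⟩ := List.isChain_cons_cons.mp hc
    obtain ⟨wm, hwm⟩ := hrung m List.mem_cons_self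
    obtain ⟨w', hw', ih⟩ := coarselyHomotopic_ladder hφ hR M m z wm hwm hc
      (by simpa using hz) fun p hp => hrung p (List.mem_cons_of_mem m hp)
    have hsquare : ElemMove H R (w.support ++ [m]) ([φ r] ++ wm.support) := by
      refine elemMove_of_isGChain
        (w.isGChain_support.append (List.isChain_singleton m) w.getLast?_support rfl hrm)
        (IsGChain.append (List.isChain_singleton _) wm.isGChain_support rfl wm.head?_support
          (hrm.elim (fun h => Or.inl (h ▸ rfl)) (hφ ·)))
        ?_ ?_ ?_
      · simp [w.head?_support]
      · simp only [List.getLast?_append, wm.getLast?_support]; rfl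
      · simp only [List.length_append, Walk.length_support, List.length_singleton]
        omega
    refine ⟨w', hw', .head (by simpa using hsquare.append [] M) ?_⟩
    simpa using ih.append [φ r] []

theorem coarselyHomotopic_map_self {φ : W → W}
    (hφ : ∀ ⦃x y⦄, H.Adj x y → φ x = φ y ∨ H.Adj (φ x) (φ y)) (hR : 2 * K + 4 ≤ R)
    {l : List W} {a : W} (hl : IsGChain H l) (hh : l.head? = some a)
    (hlast : l.getLast? = some a) (ha : φ a = a)
    (hrung : ∀ p ∈ l, ∃ w : H.Walk (φ p) p, w.length ≤ K) :
    CoarselyHomotopic H R l (l.map φ) := by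
  obtain ⟨M, rfl⟩ : ∃ M, l = a :: M := by
    cases l with
    | nil => simp at hh
    | cons x M => exact ⟨M, by simpa using hh⟩
  obtain ⟨w', hw', hslide⟩ := coarselyHomotopic_ladder hφ hR M a a (Walk.nil.copy ha.symm rfl)
    (by simp) hl hlast fun p hp => hrung p (List.mem_cons_of_mem a hp)
  have hloop : CoarselyHomotopic H R w'.support [a] :=
    coarselyHomotopic_singleton_of_length_le w'.isGChain_support
      (by rw [w'.head?_support, ha]) w'.getLast?_support (by rw [Walk.length_support]; omega)
  have hmap : (a :: M).dropLast.map φ ++ [a] = (a :: M).map φ := by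
    conv_rhs => rw [← List.dropLast_append_getLast? a hlast]
    simp [ha]
  have hcontract := hloop.append ((a :: M).dropLast.map φ) []
  rw [List.append_nil, List.append_nil, hmap] at hcontract
  simp only [Walk.support_copy, Walk.support_nil, List.singleton_append] at hslide
  exact hslide.trans hcontract

theorem coarselyHomotopic_singleton_of_forall_walk (hR : 2 * K + 4 ≤ R) {l : List W} {a : W}
    (hl : IsGChain H l) (hh : l.head? = some a) (hlast : l.getLast? = some a)
    (hrung : ∀ p ∈ l, ∃ w : H.Walk a p, w.length ≤ K) : CoarselyHomotopic H R l [a] := by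
  obtain ⟨k, hk⟩ : ∃ k, l.length = k + 1 :=
    Nat.exists_eq_succ_of_ne_zero (by rintro h; simp [List.length_eq_zero_iff.mp h] at hh)
  have hcone := coarselyHomotopic_map_self (φ := fun _ => a) (fun _ _ _ => Or.inl rfl) hR hl hh
    hlast rfl hrung
  rw [List.map_const', hk] at hcone
  exact hcone.trans (coarselyHomotopic_replicate (by omega) a k)

end CoarseHomotopy

section SumPairs

variable {α M : Type*}

def sumPairs [AddCommMonoid M] (g : α → α → M) : List α → M
  | [] => 0
  | [_] => 0
  | x :: y :: l => g x y + sumPairs g (y :: l)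

variable [AddCommMonoid M] (g : α → α → M)

@[simp] theorem sumPairs_nil : sumPairs g [] = 0 := rfl

@[simp] theorem sumPairs_singleton (x : α) : sumPairs g [x] = 0 := rfl

@[simp] theorem sumPairs_cons_cons (x y : α) (l : List α) :
    sumPairs g (x :: y :: l) = g x y + sumPairs g (y :: l) := rfl

theorem sumPairs_append :
    ∀ l₁ l₂ : List α, sumPairs g (l₁ ++ l₂) =
      sumPairs g l₁ + (Option.map₂ g l₁.getLast? l₂.head?).getD 0 + sumPairs g l₂
  | [], l₂ => by simp
  | [x], [] => by simp
  | [x], y :: l₂ => by simp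
  | x :: y :: l₁, l₂ => by
    simp only [List.cons_append, sumPairs_cons_cons, List.getLast?_cons_cons]
    rw [← List.cons_append, sumPairs_append (y :: l₁) l₂]
    abel

theorem sumPairs_append_append_congr {s s' : List α} (hs : sumPairs g s = sumPairs g s')
    (hh : s.head? = s'.head?) (hl : s.getLast? = s'.getLast?) (pre post : List α) :
    sumPairs g (pre ++ s ++ post) = sumPairs g (pre ++ s' ++ post) := by
  simp only [List.append_assoc, sumPairs_append, List.head?_append, hs, hh, hl]

theorem sumPairs_support {H : SimpleGraph α} {x y : α} (w : H.Walk x y) :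
    sumPairs g w.support = (w.darts.map fun d => g d.fst d.snd).sum := by
  induction w with
  | nil => simp
  | cons h w ih =>
    rw [Walk.support_cons, ← w.cons_tail_support, sumPairs_cons_cons, w.cons_tail_support, ih]
    simp

end SumPairs

section Telescoping

variable {α R : Type*} [CommRing R] (f h : α → R)

theorem sumPairs_sub_mul_eq_zero {l : List α} {c : R} (hf : ∀ x ∈ l, f x = c) :
    sumPairs (fun x y => (f y - f x) * h x) l = 0 := by
  induction l with
  | nil => rfl
  | cons x l ih =>
    cases l with
    | nil => rfl
    | cons y l =>
      rw [sumPairs_cons_cons, ih fun z hz => hf z (List.mem_cons_of_mem x hz),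
        hf x List.mem_cons_self, hf y (by simp)]
      ring

theorem sumPairs_sub_mul_eq_of_forall_eq {l : List α} {k : R} (hh : ∀ x ∈ l, h x = k)
    {a b : α} (ha : l.head? = some a) (hb : l.getLast? = some b) :
    sumPairs (fun x y => (f y - f x) * h x) l = (f b - f a) * k := by
  induction l generalizing a with
  | nil => simp at ha
  | cons x l ih =>
    obtain rfl : x = a := by simpa using ha
    cases l with
    | nil =>
      obtain rfl : x = b := by simpa using hb
      simp
    | cons y l =>
      rw [sumPairs_cons_cons, ih (fun z hz => hh z (List.mem_cons_of_mem x hz)) rfl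
        (by simpa using hb), hh x List.mem_cons_self]
      ring

end Telescoping

section LampGraph

variable {V : Type*} {n : ℕ} {G : SimpleGraph V}

abbrev lampLift (c : V →₀ ZMod n) : G →g lamp n G where
  toFun x := (c, x)
  map_rel' h := Or.inl ⟨rfl, h⟩

@[simp] theorem lampLift_apply (c : V →₀ ZMod n) (x : V) : lampLift (G := G) c x = (c, x) := rfl

theorem lamp_eq_or_adj_of_apply_eq {c c' : V →₀ ZMod n} {x : V}
    (h : ∀ z, z ≠ x → c z = c' z) : (c, x) = (c', x) ∨ (lamp n G).Adj (c, x) (c', x) := by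
  by_cases hc : c = c'
  · exact Or.inl (hc ▸ rfl)
  · exact Or.inr (Or.inr ⟨rfl, hc, h⟩)

theorem lamp_adj_of_apply_ne {c c' : V →₀ ZMod n} {x : V} (hx : c x ≠ c' x)
    (h : ∀ z, z ≠ x → c z = c' z) : (lamp n G).Adj (c, x) (c', x) :=
  Or.inr ⟨rfl, fun hc => hx (DFunLike.congr_fun hc x), h⟩

theorem lamp_apply_eq_of_adj {p q : (V →₀ ZMod n) × V} (h : (lamp n G).Adj p q) {z : V}
    (hz : p.2 ≠ z) : p.1 z = q.1 z := by
  rcases h with ⟨hc, _⟩ | ⟨_, _, hoff⟩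
  · rw [hc]
  · exact hoff z hz.symm

theorem IsGChain.lamp_snd {l : List ((V →₀ ZMod n) × V)} (hl : IsGChain (lamp n G) l) :
    IsGChain G (l.map Prod.snd) :=
  hl.map <| by
    rintro _ _ (⟨_, h⟩ | ⟨h, _⟩)
    exacts [Or.inr h, Or.inl h]

theorem IsGChain.lamp_apply_eq {l : List ((V →₀ ZMod n) × V)} {a : (V →₀ ZMod n) × V} {z : V}
    (hl : IsGChain (lamp n G) l) (ha : l.head? = some a) (hz : ∀ p ∈ l, p.2 ≠ z) :
    ∀ p ∈ l, p.1 z = a.1 z := by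
  induction l generalizing a with
  | nil => simp
  | cons x l ih =>
    obtain rfl : x = a := by simpa using ha
    intro p hp
    rcases List.mem_cons.mp hp with rfl | hp
    · rfl
    obtain ⟨y, l, rfl⟩ := List.exists_cons_of_ne_nil (List.ne_nil_of_mem hp)
    obtain ⟨hxy, hl⟩ := List.isChain_cons_cons.mp hl
    rw [ih hl rfl (fun q hq => hz q (List.mem_cons_of_mem x hq)) p hp]
    rcases hxy with rfl | hxy
    · rfl
    · exact (lamp_apply_eq_of_adj hxy (hz x List.mem_cons_self)).symm

end LampGraph

section Obstruction

variable {V : Type*} {n : ℕ} {G : SimpleGraph V}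

def lampWeight (u v : V) (p q : (V →₀ ZMod n) × V) : ZMod n := (q.1 u - p.1 u) * p.1 v

theorem sumPairs_lampWeight_eq_of_isGChain {R : ℕ} {u v : V} (huv : 2 * R < G.dist u v)
    {s s' : List ((V →₀ ZMod n) × V)} (hs : IsGChain (lamp n G) s)
    (hs' : IsGChain (lamp n G) s') (hh : s.head? = s'.head?) (hl : s.getLast? = s'.getLast?)
    (hlen : s.length + s'.length ≤ R) :
    sumPairs (lampWeight u v) s = sumPairs (lampWeight u v) s' := by
  by_cases hs0 : s = []
  · subst hs0
    rw [List.head?_eq_none_iff.mp hh.symm]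
  obtain ⟨a, ha⟩ : ∃ a, s.head? = some a := ⟨_, List.head?_eq_some_head hs0⟩
  obtain ⟨b, hb⟩ : ∃ b, s.getLast? = some b := ⟨_, List.getLast?_eq_some_getLast hs0⟩
  by_cases hu : ∃ p ∈ s ++ s', p.2 = u
  · by_cases hv : ∃ p ∈ s ++ s', p.2 = v
    · obtain ⟨p, hp, rfl⟩ := hu
      obtain ⟨q, hq, rfl⟩ := hv
      have hnear (x) (hx : x ∈ s ++ s') :=
        hs.lamp_snd.exists_walk_of_mem_append (a := a.2) hs'.lamp_snd (by simp [ha])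
          (by simp [← hh, ha]) (List.map_append ▸ List.mem_map_of_mem hx)
      obtain ⟨w₁, hw₁⟩ := hnear p hp
      obtain ⟨w₂, hw₂⟩ := hnear q hq
      have := dist_le (w₁.reverse.append w₂)
      simp only [Walk.length_append, Walk.length_reverse, List.length_map] at this hw₁ hw₂
      omega
    -- the lamp at `v` is constant on both segments, so both sums telescope
    push Not at hv
    have e₁ : sumPairs (lampWeight u v) s = (b.1 u - a.1 u) * a.1 v :=
      sumPairs_sub_mul_eq_of_forall_eq (fun p => p.1 u) (fun p => p.1 v)
        (hs.lamp_apply_eq ha fun p hp => hv p (List.mem_append_left s' hp)) ha hb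
    have e₂ : sumPairs (lampWeight u v) s' = (b.1 u - a.1 u) * a.1 v :=
      sumPairs_sub_mul_eq_of_forall_eq (fun p => p.1 u) (fun p => p.1 v)
        (hs'.lamp_apply_eq (hh ▸ ha) fun p hp => hv p (List.mem_append_right s hp))
        (hh ▸ ha) (hl ▸ hb)
    rw [e₁, e₂]
  · push Not at hu
    have e₁ : sumPairs (lampWeight u v) s = 0 :=
      sumPairs_sub_mul_eq_zero (fun p : (V →₀ ZMod n) × V => p.1 u) (fun p => p.1 v)
        (hs.lamp_apply_eq ha fun p hp => hu p (List.mem_append_left s' hp))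
    have e₂ : sumPairs (lampWeight u v) s' = 0 :=
      sumPairs_sub_mul_eq_zero (fun p : (V →₀ ZMod n) × V => p.1 u) (fun p => p.1 v)
        (hs'.lamp_apply_eq (hh ▸ ha) fun p hp => hu p (List.mem_append_right s hp))
    rw [e₁, e₂]

theorem sumPairs_lampWeight_eq_of_coarselyHomotopic {R : ℕ} {u v : V}
    (huv : 2 * R < G.dist u v) {l l' : List ((V →₀ ZMod n) × V)}
    (h : CoarselyHomotopic (lamp n G) R l l') :
    sumPairs (lampWeight u v) l = sumPairs (lampWeight u v) l' := by
  induction h with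
  | refl => rfl
  | tail _ hm ih =>
    obtain ⟨pre, s, s', post, rfl, rfl, hs, hs', hh, hl, hlen⟩ := hm
    exact ih.trans <| sumPairs_append_append_congr _
      (sumPairs_lampWeight_eq_of_isGChain huv hs hs' hh hl hlen) hh hl pre post

open Finsupp in
noncomputable def lampCommutator (n : ℕ) [Fact (1 < n)] {u v : V} (huv : u ≠ v)
    (w : G.Walk u v) : (lamp n G).Walk (0, u) (0, u) :=
  .cons (lamp_adj_of_apply_ne (by simp) fun z hz => by simp [Ne.symm hz]) <|
  (w.map (lampLift (single u 1))).append <|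
  .cons (lamp_adj_of_apply_ne (by simp [huv]) fun z hz => by simp [Ne.symm hz]) <|
  (w.reverse.map (lampLift (single u 1 + single v 1))).append <|
  .cons (lamp_adj_of_apply_ne (by simp [huv.symm]) fun z hz => by simp [Ne.symm hz]) <|
  (w.map (lampLift (single v 1))).append <|
  .cons (lamp_adj_of_apply_ne (by simp) fun z hz => by simp [Ne.symm hz]) <|
  w.reverse.map (lampLift 0)

theorem sum_darts_lampWeight_map_lampLift (u v : V) (c : V →₀ ZMod n) {x y : V}
    (w : G.Walk x y) :
    ((w.map (lampLift c)).darts.map fun d => lampWeight u v d.fst d.snd).sum = 0 := by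
  rw [Walk.darts_map, List.map_map]
  refine List.sum_eq_zero fun _ h => ?_
  obtain ⟨d, -, rfl⟩ := List.mem_map.mp h
  show (c u - c u) * c v = 0
  rw [sub_self, zero_mul]

theorem sumPairs_lampWeight_lampCommutator [Fact (1 < n)] {u v : V} (huv : u ≠ v)
    (w : G.Walk u v) : sumPairs (lampWeight u v) (lampCommutator n huv w).support = -1 := by
  rw [sumPairs_support]
  simp only [lampCommutator, Walk.darts_cons, Walk.darts_append, List.map_cons, List.map_append,
    List.sum_cons, List.sum_append, sum_darts_lampWeight_map_lampLift]
  simp [lampWeight, huv, huv.symm]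

end Obstruction

theorem bounded_of_coarselySimplyConnected_lamp {V : Type*} {n : ℕ} {G : SimpleGraph V}
    (hn : 2 ≤ n) (h : CoarselySimplyConnected (lamp n G)) :
    ∃ D : ℕ, ∀ x y : V, G.dist x y ≤ D := by
  have : Fact (1 < n) := ⟨hn⟩
  obtain ⟨R, hR⟩ := h
  by_contra! hunbounded
  obtain ⟨u, v, huv⟩ := hunbounded (2 * R)
  have hne : u ≠ v := by rintro rfl; simp at huv
  obtain ⟨w⟩ := Reachable.of_dist_ne_zero (by omega : G.dist u v ≠ 0)
  let loop := lampCommutator n hne w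
  have hinv := sumPairs_lampWeight_eq_of_coarselyHomotopic huv
    (hR _ loop.support loop.isGChain_support loop.head?_support loop.getLast?_support)
  rw [sumPairs_lampWeight_lampCommutator, sumPairs_singleton] at hinv
  exact neg_ne_zero.mpr one_ne_zero hinv

section Contraction

variable {V : Type*} {n : ℕ} {G : SimpleGraph V} {D R : ℕ}

noncomputable def resetLamp (u : V) (a : ZMod n) (p : (V →₀ ZMod n) × V) :
    (V →₀ ZMod n) × V :=
  (p.1.update u a, p.2)

theorem resetLamp_adj {u : V} {a : ZMod n} {p q : (V →₀ ZMod n) × V}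
    (h : (lamp n G).Adj p q) :
    resetLamp u a p = resetLamp u a q ∨ (lamp n G).Adj (resetLamp u a p) (resetLamp u a q) := by
  classical
  rcases h with ⟨hc, hpq⟩ | ⟨hx, -, hoff⟩
  · exact Or.inr (Or.inl ⟨by rw [resetLamp, resetLamp, hc], hpq⟩)
  · obtain ⟨c, x⟩ := p
    obtain ⟨c', x'⟩ := q
    obtain rfl : x = x' := hx
    refine lamp_eq_or_adj_of_apply_eq fun z hz => ?_
    simp only [Finsupp.update_apply]
    split_ifs
    · rfl
    · exact hoff z hz

theorem resetLamp_self (u : V) (p : (V →₀ ZMod n) × V) : resetLamp u (p.1 u) p = p := by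
  simp [resetLamp, Finsupp.update_self]

theorem exists_walk_resetLamp (hG : G.Connected) (hD : ∀ x y : V, G.dist x y ≤ D) (u : V)
    (a : ZMod n) (p : (V →₀ ZMod n) × V) :
    ∃ w : (lamp n G).Walk (resetLamp u a p) p, w.length ≤ 2 * D + 1 := by
  classical
  obtain ⟨c, x⟩ := p
  change ∃ w : (lamp n G).Walk (c.update u a, x) (c, x), w.length ≤ 2 * D + 1
  obtain ⟨w, hw⟩ := hG.exists_walk_length_eq_dist x u
  obtain ⟨w₁, hw₁⟩ : ∃ w₁ : (lamp n G).Walk (c.update u a, x) (c.update u a, u), w₁.length ≤ D :=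
    ⟨w.map (lampLift _), by rw [Walk.length_map, hw]; exact hD x u⟩
  obtain ⟨w₂, hw₂⟩ : ∃ w₂ : (lamp n G).Walk (c, u) (c, x), w₂.length ≤ D :=
    ⟨w.reverse.map (lampLift _), by rw [Walk.length_map, Walk.length_reverse, hw]; exact hD x u⟩
  obtain ⟨t, ht⟩ : ∃ t : (lamp n G).Walk (c.update u a, u) (c, u), t.length ≤ 1 := by
    have hoff : ∀ z, z ≠ u → c.update u a z = c z := fun z hz => by
      simp [Finsupp.update_apply, hz]
    rcases lamp_eq_or_adj_of_apply_eq (G := G) hoff with h | h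
    · exact ⟨Walk.nil.copy rfl h, by simp⟩
    · exact ⟨h.toWalk, by simp⟩
  refine ⟨w₁.append (t.append w₂), ?_⟩
  rw [Walk.length_append, Walk.length_append]
  omega

theorem coarselyHomotopic_map_resetLamp (hG : G.Connected) (hD : ∀ x y : V, G.dist x y ≤ D)
    (hR : 4 * D + 6 ≤ R) {l : List ((V →₀ ZMod n) × V)} {a : (V →₀ ZMod n) × V}
    (hl : IsGChain (lamp n G) l) (hh : l.head? = some a) (hlast : l.getLast? = some a)
    (u : V) : CoarselyHomotopic (lamp n G) R l (l.map (resetLamp u (a.1 u))) :=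
  coarselyHomotopic_map_self (K := 2 * D + 1) (fun _ _ => resetLamp_adj) (by omega) hl hh hlast
    (resetLamp_self u a)
    fun p _ => exists_walk_resetLamp hG hD u (a.1 u) p

theorem coarselyHomotopic_singleton_of_forall_fst_eq (hG : G.Connected)
    (hD : ∀ x y : V, G.dist x y ≤ D) (hR : 2 * D + 4 ≤ R) {l : List ((V →₀ ZMod n) × V)}
    {a : (V →₀ ZMod n) × V} (hl : IsGChain (lamp n G) l) (hh : l.head? = some a)
    (hlast : l.getLast? = some a) (hfst : ∀ p ∈ l, p.1 = a.1) :
    CoarselyHomotopic (lamp n G) R l [a] := by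
  refine coarselyHomotopic_singleton_of_forall_walk hR hl hh hlast fun p hp => ?_
  obtain ⟨c, x⟩ := p
  obtain rfl : c = a.1 := hfst _ hp
  obtain ⟨w, hw⟩ := hG.exists_walk_length_eq_dist a.2 x
  exact ⟨w.map (lampLift a.1), by rw [Walk.length_map, hw]; exact hD _ _⟩

theorem coarselyHomotopic_singleton_of_lamps_subset (hG : G.Connected)
    (hD : ∀ x y : V, G.dist x y ≤ D) (hR : 4 * D + 6 ≤ R) (a : (V →₀ ZMod n) × V)
    (S : Finset V) :
    ∀ l : List ((V →₀ ZMod n) × V), IsGChain (lamp n G) l → l.head? = some a →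
      l.getLast? = some a → (∀ p ∈ l, ∀ z ∉ S, p.1 z = a.1 z) →
      CoarselyHomotopic (lamp n G) R l [a] := by
  classical
  induction S using Finset.induction_on with
  | empty =>
    intro l hl hh hlast hS
    exact coarselyHomotopic_singleton_of_forall_fst_eq hG hD (by omega) hl hh hlast
      fun p hp => Finsupp.ext fun z => hS p hp z (Finset.notMem_empty z)
  | insert u S _ ih =>
    intro l hl hh hlast hS
    refine (coarselyHomotopic_map_resetLamp hG hD hR hl hh hlast u).trans <|
      ih _ (hl.map fun _ _ => resetLamp_adj) (by simp [hh, resetLamp_self])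
        (by simp [List.getLast?_map, hlast, resetLamp_self]) ?_
    simp only [List.mem_map]
    rintro _ ⟨p, hp, rfl⟩ z hz
    by_cases hzu : z = u
    · simp [resetLamp, hzu]
    · simp [resetLamp, Finsupp.update_apply, hzu, hS p hp z (by simp [hzu, hz])]

theorem coarselySimplyConnected_lamp (hG : G.Connected) (hD : ∀ x y : V, G.dist x y ≤ D) :
    CoarselySimplyConnected (lamp n G) := by
  refine ⟨4 * D + 6, fun a l hl hh hlast => ?_⟩
  classical
  refine coarselyHomotopic_singleton_of_lamps_subset hG hD le_rfl a (l.map Prod.snd).toFinset l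
    hl hh hlast fun p hp z hz => hl.lamp_apply_eq hh (fun q hq hqz => hz ?_) p hp
  exact List.mem_toFinset.mpr (List.mem_map.mpr ⟨q, hq, hqz⟩)

end Contraction

theorem stmt12_general {V : Type*} (n : ℕ) (hn : 2 ≤ n) (G : SimpleGraph V)
    (hG : G.Connected) :
    CoarselySimplyConnected (lamp n G) ↔ ∃ R : ℕ, ∀ x y : V, G.dist x y ≤ R :=
  ⟨bounded_of_coarselySimplyConnected_lamp hn,
    fun ⟨_, hD⟩ => coarselySimplyConnected_lamp hG hD⟩

/-- The lamplighter graph `L_n(X)` is coarsely simply connected if and only if the base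
graph `X` is bounded. -/
theorem stmt12 {V : Type*} [Nonempty V] (n : ℕ) (hn : 2 ≤ n) (G : SimpleGraph V)
    (hG : G.Connected) :
    CoarselySimplyConnected (lamp n G) ↔ ∃ R : ℕ, ∀ x y : V, G.dist x y ≤ R :=
  stmt12_general n hn G hG
end

section
/- Let n ≥ 2 and let X be a graph. Fix two distinct finitely supported colourings c1, c2 : V(X) → Z/nZ and points a1 = (c1, f1) ∈ X(c1), a2 = (c2, f2) ∈ X(c2) in the lamplighter graph L_n(X) with the diligent metric. Then for every vertex x ∈ L_n(X), one has d(x, a1) ≤ 2(d(x, X(c1)) + d(x, X(c2))) + d(a1, a2) + d(X(c1), X(c2)), and the same bound holds for d(x, a2). -/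
open SimpleGraph

/-- The diligent metric on the lamplighter graph `L_n(X)`: the shortest length of a
path in the base graph from `x.2` to `y.2` visiting all vertices where the two
colourings differ. -/
noncomputable def ddil {V : Type*} (n : ℕ) (G : SimpleGraph V)
    (x y : (V →₀ ZMod n) × V) : ℕ :=
  sInf {L | ∃ w : G.Walk x.2 y.2, w.length = L ∧ ∀ v, x.1 v ≠ y.1 v → v ∈ w.support}

/-- The diligent distance from a point of the lamplighter graph to the leaf `X(c)`. -/
noncomputable def dToLeaf {V : Type*} (n : ℕ) (G : SimpleGraph V)
    (x : (V →₀ ZMod n) × V) (c : V →₀ ZMod n) : ℕ :=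
  sInf {L | ∃ p : V, ddil n G x (c, p) = L}

/-- The diligent distance between the leaves `X(c1)` and `X(c2)`. -/
noncomputable def dLeaves {V : Type*} (n : ℕ) (G : SimpleGraph V)
    (c1 c2 : V →₀ ZMod n) : ℕ :=
  sInf {L | ∃ p q : V, ddil n G (c1, p) (c2, q) = L}

/-!
Pick a vertex `v` where `c1` and `c2` differ: every diligent path between the leaves `X(c1)`
and `X(c2)` visits `v`. If `(c1, p1)` is a point of `X(c1)` nearest to `x`, then going through
`x` gives `dist p1 v ≤ d(x, X(c1)) + d(x, X(c2))`, while `dist v f1 ≤ d(a1, a2)`. Walking from `x`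
to `(c1, p1)` and then inside the leaf `X(c1)` from `p1` via `v` to `f1` gives the bound.
-/

namespace SimpleGraph

variable {V : Type*} {G : SimpleGraph V} {n : ℕ}

lemma Connected.exists_walk_support_superset (hG : G.Connected) (s : Finset V) (p q : V) :
    ∃ w : G.Walk p q, ∀ v ∈ s, v ∈ w.support := by
  classical
  induction s using Finset.induction_on generalizing p with
  | empty => exact ⟨(hG p q).some, by simp⟩
  | insert a s _ ih =>
    obtain ⟨w, hw⟩ := ih a
    refine ⟨(hG p a).some.append w, fun v hv => ?_⟩
    rw [Walk.mem_support_append_iff]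
    rcases Finset.mem_insert.mp hv with rfl | hv
    · exact Or.inr w.start_mem_support
    · exact Or.inr (hw v hv)

lemma ddil_le_length (x y : (V →₀ ZMod n) × V) (w : G.Walk x.2 y.2)
    (hw : ∀ v, x.1 v ≠ y.1 v → v ∈ w.support) : ddil n G x y ≤ w.length :=
  Nat.sInf_le ⟨w, rfl, hw⟩

lemma Connected.exists_walk_length_eq_ddil (hG : G.Connected) (x y : (V →₀ ZMod n) × V) :
    ∃ w : G.Walk x.2 y.2, w.length = ddil n G x y ∧ ∀ v, x.1 v ≠ y.1 v → v ∈ w.support := by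
  obtain ⟨w, hw⟩ := hG.exists_walk_support_superset (x.1 - y.1).support x.2 y.2
  have hs : {L | ∃ w : G.Walk x.2 y.2, w.length = L ∧
      ∀ v, x.1 v ≠ y.1 v → v ∈ w.support}.Nonempty :=
    ⟨w.length, w, rfl, fun v hv => hw v (by simpa [sub_eq_zero] using hv)⟩
  exact Nat.sInf_mem hs

lemma Connected.ddil_comm (hG : G.Connected) (x y : (V →₀ ZMod n) × V) :
    ddil n G x y = ddil n G y x := by
  have key : ∀ a b : (V →₀ ZMod n) × V, ddil n G a b ≤ ddil n G b a := by
    intro a b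
    obtain ⟨w, hlen, hw⟩ := hG.exists_walk_length_eq_ddil b a
    calc ddil n G a b ≤ w.reverse.length :=
          ddil_le_length a b w.reverse fun v hv => by simpa using hw v (Ne.symm hv)
      _ = ddil n G b a := by rw [Walk.length_reverse, hlen]
  exact le_antisymm (key x y) (key y x)

lemma Connected.ddil_triangle (hG : G.Connected) (x y z : (V →₀ ZMod n) × V) :
    ddil n G x z ≤ ddil n G x y + ddil n G y z := by
  obtain ⟨w₁, hlen₁, hw₁⟩ := hG.exists_walk_length_eq_ddil x y
  obtain ⟨w₂, hlen₂, hw₂⟩ := hG.exists_walk_length_eq_ddil y z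
  calc ddil n G x z ≤ (w₁.append w₂).length := ddil_le_length x z _ fun v hv => by
        rw [Walk.mem_support_append_iff]
        by_cases h : x.1 v = y.1 v
        · exact Or.inr (hw₂ v fun h' => hv (h.trans h'))
        · exact Or.inl (hw₁ v h)
    _ = ddil n G x y + ddil n G y z := by rw [Walk.length_append, hlen₁, hlen₂]

lemma Connected.ddil_le_dist (hG : G.Connected) (c : V →₀ ZMod n) (p q : V) :
    ddil n G (c, p) (c, q) ≤ G.dist p q := by
  obtain ⟨w, hw⟩ := hG.exists_walk_length_eq_dist p q
  exact hw ▸ ddil_le_length (c, p) (c, q) w fun _ hv => absurd rfl hv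

lemma Connected.dist_le_ddil_of_apply_ne (hG : G.Connected) {c c' : V →₀ ZMod n} {v : V}
    (hv : c v ≠ c' v) (p q : V) :
    G.dist p v ≤ ddil n G (c, p) (c', q) := by
  classical
  obtain ⟨w, hlen, hw⟩ := hG.exists_walk_length_eq_ddil (c, p) (c', q)
  exact hlen ▸ (dist_le _).trans (w.length_takeUntil_le_length (hw v hv))

lemma exists_ddil_eq_dToLeaf (x : (V →₀ ZMod n) × V) (c : V →₀ ZMod n) :
    ∃ p, ddil n G x (c, p) = dToLeaf n G x c :=
  Nat.sInf_mem (s := {L | ∃ p : V, ddil n G x (c, p) = L}) ⟨_, x.2, rfl⟩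

lemma Connected.ddil_le_of_apply_ne (hG : G.Connected) {c c' : V →₀ ZMod n} {v : V}
    (hv : c v ≠ c' v) (x : (V →₀ ZMod n) × V) (f f' : V) :
    ddil n G x (c, f) ≤
      2 * (dToLeaf n G x c + dToLeaf n G x c') + ddil n G (c, f) (c', f') := by
  obtain ⟨p, hp⟩ := exists_ddil_eq_dToLeaf (G := G) x c
  obtain ⟨p', hp'⟩ := exists_ddil_eq_dToLeaf (G := G) x c'
  have hpv : G.dist p v ≤ dToLeaf n G x c + dToLeaf n G x c' :=
    calc G.dist p v ≤ ddil n G (c, p) (c', p') := hG.dist_le_ddil_of_apply_ne hv p p'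
      _ ≤ ddil n G (c, p) x + ddil n G x (c', p') := hG.ddil_triangle _ _ _
      _ = dToLeaf n G x c + dToLeaf n G x c' := by rw [hG.ddil_comm, hp, hp']
  have hfv : G.dist f v ≤ ddil n G (c, f) (c', f') := hG.dist_le_ddil_of_apply_ne hv f f'
  have hleaf : ddil n G (c, p) (c, f) ≤ G.dist p v + G.dist f v :=
    calc ddil n G (c, p) (c, f) ≤ G.dist p f := hG.ddil_le_dist c p f
      _ ≤ G.dist p v + G.dist v f := hG.dist_triangle
      _ = G.dist p v + G.dist f v := by rw [dist_comm (u := v)]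
  have := hG.ddil_triangle x (c, p) (c, f)
  omega

end SimpleGraph

theorem stmt19_general {V : Type*} (n : ℕ) (G : SimpleGraph V) (hG : G.Connected)
    (c1 c2 : V →₀ ZMod n) (hne : c1 ≠ c2) (f1 f2 : V)
    (x : (V →₀ ZMod n) × V) :
    ddil n G x (c1, f1) ≤ 2 * (dToLeaf n G x c1 + dToLeaf n G x c2) +
        ddil n G (c1, f1) (c2, f2) + dLeaves n G c1 c2 ∧
    ddil n G x (c2, f2) ≤ 2 * (dToLeaf n G x c1 + dToLeaf n G x c2) +
        ddil n G (c1, f1) (c2, f2) + dLeaves n G c1 c2 := by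
  obtain ⟨v, hv⟩ := DFunLike.ne_iff.mp hne
  refine ⟨(hG.ddil_le_of_apply_ne hv x f1 f2).trans (Nat.le_add_right _ _), ?_⟩
  have h2 := hG.ddil_le_of_apply_ne hv.symm x f2 f1
  rw [hG.ddil_comm (c2, f2)] at h2
  omega

/-- For distinct colourings `c1 ≠ c2`, points `a1 = (c1, f1)` and `a2 = (c2, f2)` on
the corresponding leaves, and any vertex `x` of the lamplighter graph with the diligent
metric, `d(x, a1), d(x, a2) ≤ 2(d(x, X(c1)) + d(x, X(c2))) + d(a1, a2) + d(X(c1), X(c2))`. -/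
theorem stmt19 {V : Type*} (n : ℕ) (hn : 2 ≤ n) (G : SimpleGraph V) (hG : G.Connected)
    (c1 c2 : V →₀ ZMod n) (hne : c1 ≠ c2) (f1 f2 : V)
    (x : (V →₀ ZMod n) × V) :
    ddil n G x (c1, f1) ≤ 2 * (dToLeaf n G x c1 + dToLeaf n G x c2) +
        ddil n G (c1, f1) (c2, f2) + dLeaves n G c1 c2 ∧
    ddil n G x (c2, f2) ≤ 2 * (dToLeaf n G x c1 + dToLeaf n G x c2) +
        ddil n G (c1, f1) (c2, f2) + dLeaves n G c1 c2 :=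
  stmt19_general n G hG c1 c2 hne f1 f2 x
end
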